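/- arXiv:2402.10335 — 2 statements merged into one kernel-verified Lean document; each statement's English description precedes it below -/
import Mathlib

section
/- Let G be an (incomplete) correlation graph. If G can be clustered by a sequence of k operations, each of which is either the recoloring of a single edge (changing its color between blue and red) or a permissive vertex split, then G can be clustered by a sequence of k operations all of which are permissive vertex splits. -/
structure ICG where
  verts : Finset ℕ
  blue : Finset (Sym2 ℕ)
  red : Finset (Sym2 ℕ)
  blue_mem : ∀ e ∈ blue, ∀ x ∈ e, x ∈ verts
  red_mem : ∀ e ∈ red, ∀ x ∈ e, x ∈ verts
  blue_nd : ∀ e ∈ blue, ¬ e.IsDiag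
  red_nd : ∀ e ∈ red, ¬ e.IsDiag
  disj : Disjoint blue red

def PermSplit (G G' : ICG) : Prop :=
  ∃ v v1 v2 : ℕ, v ∈ G.verts ∧ v1 ∉ G.verts ∧ v2 ∉ G.verts ∧ v1 ≠ v2 ∧
    G'.verts = insert v1 (insert v2 (G.verts.erase v)) ∧
    (∀ u w : ℕ, u ≠ v → w ≠ v → u ≠ v1 → u ≠ v2 → w ≠ v1 → w ≠ v2 →
      ((s(u,w) ∈ G.blue ↔ s(u,w) ∈ G'.blue) ∧ (s(u,w) ∈ G.red ↔ s(u,w) ∈ G'.red))) ∧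
    (∀ u : ℕ, s(u,v) ∈ G.blue → s(u,v1) ∈ G'.blue ∨ s(u,v2) ∈ G'.blue) ∧
    (∀ u : ℕ, s(u,v) ∈ G.red → s(u,v1) ∈ G'.red ∨ s(u,v2) ∈ G'.red)

def HasErrCycle (G : ICG) : Prop :=
  ∃ (l : List ℕ) (u v : ℕ), l.Nodup ∧ l.Chain' (fun a b => s(a,b) ∈ G.blue) ∧
    l.head? = some u ∧ l.getLast? = some v ∧ s(u,v) ∈ G.red

def Splits (n : ℕ) (G G' : ICG) : Prop :=
  ∃ f : ℕ → ICG, f 0 = G ∧ f n = G' ∧ ∀ i < n, PermSplit (f i) (f (i+1))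

def Recolor (G G' : ICG) : Prop :=
  G'.verts = G.verts ∧
  ∃ e : Sym2 ℕ,
    (e ∈ G.blue ∧ G'.blue = G.blue.erase e ∧ G'.red = insert e G.red) ∨
    (e ∈ G.red ∧ G'.red = G.red.erase e ∧ G'.blue = insert e G.blue)

def MixedSeq (n : ℕ) (G G' : ICG) : Prop :=
  ∃ f : ℕ → ICG, f 0 = G ∧ f n = G' ∧
    ∀ i < n, Recolor (f i) (f (i+1)) ∨ PermSplit (f i) (f (i+1))

/-!
Follow the mixed sequence with a sequence of splits only, keeping a map `φ` from the current
split-only graph `K` to the current mixed graph `H` that is injective on the vertices of `K` lying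
on two edges and preserves the colour of every edge between such vertices. Each vertex of an
erroneous cycle lies on two of its edges, so `φ` carries erroneous cycles of `K` to erroneous
cycles of `H`. A split of `v` in `H` is copied by splitting the preimage of `v` in `K` and routing
its edges as the split of `v` does. A recolouring of an edge `e₀` is copied by moving the preimage
of `e₀` to a fresh copy of one of its endpoints: that copy lies on a single edge, hence on no cycle.
-/

lemma Set.InjOn.sym2_map {α β : Type*} {f : α → β} {s : Set α} (hf : Set.InjOn f s) :
    Set.InjOn (Sym2.map f) {e | ∀ x ∈ e, x ∈ s} := by
  intro e he e' he' h
  induction e using Sym2.ind with | _ x y =>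
  induction e' using Sym2.ind with | _ x' y' =>
  simp only [Set.mem_ofPred_eq, Sym2.mem_iff, forall_eq_or_imp, forall_eq] at he he'
  simp only [Sym2.map_mk, Sym2.eq_iff] at h ⊢
  rcases h with ⟨hx, hy⟩ | ⟨hx, hy⟩
  exacts [.inl ⟨hf he.1 he'.1 hx, hf he.2 he'.2 hy⟩, .inr ⟨hf he.1 he'.2 hx, hf he.2 he'.1 hy⟩]

lemma Finset.exists_two_not_mem (s : Finset ℕ) : ∃ a1 a2, a1 ∉ s ∧ a2 ∉ s ∧ a1 ≠ a2 := by
  obtain ⟨a1, h1⟩ := Infinite.exists_notMem_finset s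
  obtain ⟨a2, h2⟩ := Infinite.exists_notMem_finset (insert a1 s)
  exact ⟨a1, a2, h1, fun h => h2 (Finset.mem_insert_of_mem h),
    fun h => h2 (h ▸ Finset.mem_insert_self _ _)⟩

inductive Color
  | blue
  | red

namespace ICG

def edgesOf (K : ICG) : Color → Finset (Sym2 ℕ)
  | .blue => K.blue
  | .red => K.red

def edgeSet (K : ICG) : Set (Sym2 ℕ) := {e | ∃ col, e ∈ K.edgesOf col}

/-- Vertices on two distinct edges; unlike the 2-core, nothing is pruned iteratively. -/
def core (K : ICG) : Set ℕ :=
  {x | ∃ e₁ ∈ K.edgeSet, ∃ e₂ ∈ K.edgeSet, e₁ ≠ e₂ ∧ x ∈ e₁ ∧ x ∈ e₂}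

variable {K : ICG} {col col' : Color} {e : Sym2 ℕ} {x : ℕ}

lemma mem_verts_of_mem_edgeSet (he : e ∈ K.edgeSet) (hx : x ∈ e) : x ∈ K.verts := by
  obtain ⟨col, he⟩ := he
  cases col
  exacts [K.blue_mem e he x hx, K.red_mem e he x hx]

lemma not_isDiag_of_mem_edgeSet (he : e ∈ K.edgeSet) : ¬ e.IsDiag := by
  obtain ⟨col, he⟩ := he
  cases col
  exacts [K.blue_nd e he, K.red_nd e he]

lemma eq_of_mem_edgesOf (h : e ∈ K.edgesOf col) (h' : e ∈ K.edgesOf col') : col = col' := by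
  have hdisj := Finset.disjoint_left.mp K.disj
  cases col <;> cases col'
  exacts [rfl, (hdisj h h').elim, (hdisj h' h).elim, rfl]

lemma core_subset_verts : K.core ⊆ K.verts :=
  fun _ ⟨_, he, _, _, _, hx, _⟩ => mem_verts_of_mem_edgeSet he hx

lemma verts_nonempty_of_mem_edgeSet (he : e ∈ K.edgeSet) : K.verts.Nonempty :=
  ⟨_, mem_verts_of_mem_edgeSet he (Sym2.out_fst_mem e)⟩

/-- The edge into a vertex of the cycle and the edge out of it are distinct: two consecutive blue
edges differ by `Nodup`, and a blue edge differs from the red closing edge. -/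
lemma mem_core_of_mem_errCycle {l : List ℕ} {u v : ℕ} (hnd : l.Nodup)
    (hch : l.IsChain (fun a b => s(a, b) ∈ K.blue)) (hu : l.head? = some u)
    (hv : l.getLast? = some v) (hred : s(u, v) ∈ K.red) (hx : x ∈ l) : x ∈ K.core := by
  have hblue : ∀ i (h : i + 1 < l.length), s(l[i], l[i + 1]) ∈ K.blue :=
    List.isChain_iff_getElem.mp hch
  have hne : ∀ i (h : i + 1 < l.length), s(l[i], l[i + 1]) ≠ s(u, v) := fun i h heq =>
    Finset.disjoint_left.mp K.disj (hblue i h) (heq ▸ hred)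
  rw [List.head?_eq_getElem?] at hu
  rw [List.getLast?_eq_getElem?] at hv
  obtain ⟨i, hi, rfl⟩ := List.getElem_of_mem hx
  have hu0 : l[0] = u := by simpa [List.getElem?_eq_getElem (by omega : 0 < l.length)] using hu
  have hlast : ∀ j (h : j = l.length - 1), l[j] = v := by
    rintro j rfl; simpa [List.getElem?_eq_getElem (by omega : l.length - 1 < l.length)] using hv
  have hlen : 1 < l.length := by
    by_contra hlen
    exact K.red_nd _ hred (by rw [← hu0, ← hlast 0 (by omega)]; rfl)
  rcases i with _ | j
  · exact ⟨_, ⟨.blue, hblue 0 hlen⟩, _, ⟨.red, hred⟩, hne 0 hlen, by simp, by simp [hu0]⟩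
  refine ⟨_, ⟨.blue, hblue j hi⟩, ?_⟩
  by_cases hj : j + 2 < l.length
  · refine ⟨_, ⟨.blue, hblue (j + 1) hj⟩, fun heq => ?_, by simp, by simp⟩
    have h1 : l[j] ≠ l[j + 1] := fun h => by simpa using (hnd.getElem_inj_iff).mp h
    have h2 : l[j] ≠ l[j + 2] := fun h => by simpa using (hnd.getElem_inj_iff).mp h
    rcases Sym2.eq_iff.mp heq with ⟨h, -⟩ | ⟨h, -⟩
    exacts [h1 h, h2 h]
  · exact ⟨_, ⟨.red, hred⟩, hne j hi, by simp, by simp [hlast (j + 1) (by omega)]⟩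

end ICG

open ICG

section Embedding

variable {φ π : ℕ → ℕ} {K H H' T : ICG} {e : Sym2 ℕ}

structure CoreEmbedding (φ : ℕ → ℕ) (K H : ICG) : Prop where
  mapsTo : Set.MapsTo φ K.core H.verts
  injOn : Set.InjOn φ K.core
  map_mem : ∀ col, ∀ e ∈ K.edgesOf col, (∀ x ∈ e, x ∈ K.core) → e.map φ ∈ H.edgesOf col

lemma CoreEmbedding.id (G : ICG) : CoreEmbedding id G G where
  mapsTo _ hx := core_subset_verts hx
  injOn := Set.injOn_id _
  map_mem _ _ he _ := by rwa [Sym2.map_id]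

lemma CoreEmbedding.retarget (hφ : CoreEmbedding φ K H) (hverts : Set.MapsTo φ K.core H'.verts)
    (hedges : ∀ col, ∀ e ∈ K.edgesOf col, (∀ x ∈ e, x ∈ K.core) →
      e.map φ ∈ H.edgesOf col → e.map φ ∈ H'.edgesOf col) :
    CoreEmbedding φ K H' where
  mapsTo := hverts
  injOn := hφ.injOn
  map_mem col e he hcore := hedges col e he hcore (hφ.map_mem col e he hcore)

lemma HasErrCycle.of_coreEmbedding (hφ : CoreEmbedding φ K H) (hK : HasErrCycle K) :
    HasErrCycle H := by
  obtain ⟨l, u, v, hnd, hch, hu, hv, hred⟩ := hK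
  have hcore : ∀ x ∈ l, x ∈ K.core := fun x hx => mem_core_of_mem_errCycle hnd hch hu hv hred hx
  have hpair : ∀ col x y, x ∈ l → y ∈ l → s(x, y) ∈ K.edgesOf col →
      s(φ x, φ y) ∈ H.edgesOf col := fun col x y hx hy he =>
    hφ.map_mem col _ he fun z hz => by
      rcases Sym2.mem_iff.mp hz with rfl | rfl
      exacts [hcore _ hx, hcore _ hy]
  refine ⟨l.map φ, φ u, φ v,
    hnd.map_on fun x hx y hy => hφ.injOn (hcore x hx) (hcore y hy), ?_, by simp [hu], by simp [hv],
    hpair .red u v (List.mem_of_mem_head? hu) (List.mem_of_mem_getLast? hv) hred⟩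
  exact List.isChain_map _ |>.mpr <| hch.imp_of_mem_imp fun x y hx hy => hpair .blue x y hx hy

structure IsFold (π : ℕ → ℕ) (T K : ICG) : Prop where
  map_mem : ∀ col, ∀ e ∈ T.edgesOf col, e.map π ∈ K.edgesOf col
  injOn : Set.InjOn (Sym2.map π) T.edgeSet

lemma IsFold.map_mem_edgeSet (hπ : IsFold π T K) (he : e ∈ T.edgeSet) : e.map π ∈ K.edgeSet :=
  let ⟨col, he⟩ := he
  ⟨col, hπ.map_mem col e he⟩

lemma IsFold.mapsTo_core (hπ : IsFold π T K) : Set.MapsTo π T.core K.core := by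
  rintro x ⟨e₁, he₁, e₂, he₂, hne, hx₁, hx₂⟩
  exact ⟨_, hπ.map_mem_edgeSet he₁, _, hπ.map_mem_edgeSet he₂,
    fun h => hne (hπ.injOn he₁ he₂ h), Sym2.mem_map.mpr ⟨x, hx₁, rfl⟩,
    Sym2.mem_map.mpr ⟨x, hx₂, rfl⟩⟩

lemma IsFold.map_mem_core (hπ : IsFold π T K) (he : ∀ x ∈ e, x ∈ T.core) :
    ∀ y ∈ e.map π, y ∈ K.core := by
  intro y hy
  obtain ⟨x, hx, rfl⟩ := Sym2.mem_map.mp hy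
  exact hπ.mapsTo_core (he x hx)

lemma CoreEmbedding.comp (hφ : CoreEmbedding φ K H) (hπ : IsFold π T K)
    (hinj : Set.InjOn π T.core) : CoreEmbedding (φ ∘ π) T H where
  mapsTo := hφ.mapsTo.comp hπ.mapsTo_core
  injOn := hφ.injOn.comp hinj hπ.mapsTo_core
  map_mem col e he hcore := by
    rw [← Sym2.map_map]
    exact hφ.map_mem col _ (hπ.map_mem col e he) (hπ.map_mem_core hcore)

end Embedding

section Relabel

variable (a a1 a2 : ℕ) (S : Set (Sym2 ℕ))

open Classical in
noncomputable def copyFor (e : Sym2 ℕ) : ℕ := if e ∈ S then a2 else a1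

noncomputable def relabel (e : Sym2 ℕ) : Sym2 ℕ :=
  e.map fun x => if x = a then copyFor a1 a2 S e else x

def unsplit (x : ℕ) : ℕ := if x = a1 ∨ x = a2 then a else x

variable {a a1 a2 S} {e : Sym2 ℕ} {x : ℕ}

lemma copyFor_of_mem (h : e ∈ S) : copyFor a1 a2 S e = a2 := if_pos h

lemma copyFor_of_not_mem (h : e ∉ S) : copyFor a1 a2 S e = a1 := if_neg h

lemma copyFor_eq_or : copyFor a1 a2 S e = a1 ∨ copyFor a1 a2 S e = a2 := by
  unfold copyFor
  split_ifs <;> simp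

lemma relabel_of_not_mem (h : a ∉ e) : relabel a a1 a2 S e = e :=
  (Sym2.map_congr fun _ hx => if_neg (ne_of_mem_of_not_mem hx h)).trans
    (congrFun Sym2.map_id e)

lemma copyFor_mem_relabel (h : a ∈ e) : copyFor a1 a2 S e ∈ relabel a a1 a2 S e :=
  Sym2.mem_map.mpr ⟨a, h, if_pos rfl⟩

lemma mem_relabel (hx : x ∈ relabel a a1 a2 S e) :
    (a ∈ e ∧ x = copyFor a1 a2 S e) ∨ (x ∈ e ∧ x ≠ a) := by
  obtain ⟨y, hy, rfl⟩ := Sym2.mem_map.mp hx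
  by_cases hya : y = a
  · exact .inl ⟨hya ▸ hy, if_pos hya⟩
  · exact .inr ⟨by simpa [hya] using hy, by simp [hya]⟩

lemma map_relabel {φ ψ : ℕ → ℕ} (hψ : ∀ x ∈ e, x ≠ a → ψ x = φ x) :
    (relabel a a1 a2 S e).map ψ = e.map (Function.update φ a (ψ (copyFor a1 a2 S e))) := by
  rw [relabel, Sym2.map_map]
  refine Sym2.map_congr fun x hx => ?_
  by_cases hxa : x = a
  · simp [hxa]
  · simp [hxa, hψ x hx hxa]

lemma unsplit_copyFor : unsplit a a1 a2 (copyFor a1 a2 S e) = a := by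
  rcases copyFor_eq_or (a1 := a1) (a2 := a2) (S := S) (e := e) with h | h <;> simp [h, unsplit]

lemma unsplit_relabel (h1 : a1 ∉ e) (h2 : a2 ∉ e) :
    (relabel a a1 a2 S e).map (unsplit a a1 a2) = e := by
  rw [map_relabel (ψ := unsplit a a1 a2) (φ := id) fun x hx _ => by
    simp [unsplit, ne_of_mem_of_not_mem hx h1, ne_of_mem_of_not_mem hx h2], unsplit_copyFor,
    show Function.update id a a = id from Function.update_eq_self a id, Sym2.map_id, id]

end Relabel

/-- `PermSplit` with the splitting data made explicit and the two colours treated uniformly. -/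
structure IsSplitAt (G G' : ICG) (v v1 v2 : ℕ) : Prop where
  mem : v ∈ G.verts
  fst_not_mem : v1 ∉ G.verts
  snd_not_mem : v2 ∉ G.verts
  fst_ne_snd : v1 ≠ v2
  verts_eq : G'.verts = insert v1 (insert v2 (G.verts.erase v))
  mem_edgesOf_iff : ∀ col u w, u ≠ v → w ≠ v → u ≠ v1 → u ≠ v2 → w ≠ v1 → w ≠ v2 →
    (s(u, w) ∈ G.edgesOf col ↔ s(u, w) ∈ G'.edgesOf col)
  edge_at : ∀ col u, s(u, v) ∈ G.edgesOf col →
    s(u, v1) ∈ G'.edgesOf col ∨ s(u, v2) ∈ G'.edgesOf col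

lemma permSplit_iff_exists_isSplitAt {G G' : ICG} :
    PermSplit G G' ↔ ∃ v v1 v2, IsSplitAt G G' v v1 v2 := by
  constructor
  · rintro ⟨v, v1, v2, hv, h1, h2, h12, hV, haway, hblue, hred⟩
    refine ⟨v, v1, v2, hv, h1, h2, h12, hV, fun col => ?_, fun col => ?_⟩ <;> cases col
    exacts [fun u w hu hw hu1 hu2 hw1 hw2 => (haway u w hu hw hu1 hu2 hw1 hw2).1,
      fun u w hu hw hu1 hu2 hw1 hw2 => (haway u w hu hw hu1 hu2 hw1 hw2).2, hblue, hred]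
  · rintro ⟨v, v1, v2, hv, h1, h2, h12, hV, haway, hat⟩
    exact ⟨v, v1, v2, hv, h1, h2, h12, hV, fun u w hu hw hu1 hu2 hw1 hw2 =>
      ⟨haway .blue u w hu hw hu1 hu2 hw1 hw2, haway .red u w hu hw hu1 hu2 hw1 hw2⟩,
      hat .blue, hat .red⟩

namespace IsSplitAt

variable {G G' : ICG} {v v1 v2 x : ℕ} {col : Color} {e : Sym2 ℕ}

lemma permSplit (hs : IsSplitAt G G' v v1 v2) : PermSplit G G' :=
  permSplit_iff_exists_isSplitAt.mpr ⟨v, v1, v2, hs⟩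

lemma fst_mem (hs : IsSplitAt G G' v v1 v2) : v1 ∈ G'.verts := by
  simp [hs.verts_eq]

lemma snd_mem (hs : IsSplitAt G G' v v1 v2) : v2 ∈ G'.verts := by
  simp [hs.verts_eq]

lemma mem_verts_of_ne (hs : IsSplitAt G G' v v1 v2) (hx : x ∈ G.verts) (hxv : x ≠ v) :
    x ∈ G'.verts := by
  simp [hs.verts_eq, hx, hxv]

lemma mem_edgesOf_of_not_mem (hs : IsSplitAt G G' v v1 v2) (he : e ∈ G.edgesOf col)
    (hv : v ∉ e) : e ∈ G'.edgesOf col := by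
  induction e using Sym2.ind with
  | _ u w =>
    have hu : u ∈ G.verts := mem_verts_of_mem_edgeSet ⟨col, he⟩ (Sym2.mem_mk_left u w)
    have hw : w ∈ G.verts := mem_verts_of_mem_edgeSet ⟨col, he⟩ (Sym2.mem_mk_right u w)
    refine (hs.mem_edgesOf_iff col u w ?_ ?_ ?_ ?_ ?_ ?_).mp he
    · exact fun h => hv (h ▸ Sym2.mem_mk_left u w)
    · exact fun h => hv (h ▸ Sym2.mem_mk_right u w)
    all_goals rintro rfl
    exacts [hs.fst_not_mem hu, hs.snd_not_mem hu, hs.fst_not_mem hw, hs.snd_not_mem hw]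

end IsSplitAt

lemma Recolor.exists_edge {H H' : ICG} (hr : Recolor H H') : H'.verts = H.verts ∧
    ∃ e₀ ∈ H.edgeSet, ∀ col, ∀ e ∈ H.edgesOf col, e ≠ e₀ → e ∈ H'.edgesOf col := by
  obtain ⟨hV, e₀, ⟨he₀, hb, hr⟩ | ⟨he₀, hr, hb⟩⟩ := hr
  · refine ⟨hV, e₀, ⟨.blue, he₀⟩, fun col e he hne => ?_⟩
    cases col <;> simp_all [edgesOf]
  · refine ⟨hV, e₀, ⟨.red, he₀⟩, fun col e he hne => ?_⟩
    cases col <;> simp_all [edgesOf]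

lemma Splits.snoc {n : ℕ} {G K T : ICG} (h : Splits n G K) (hT : PermSplit K T) :
    Splits (n + 1) G T := by
  obtain ⟨g, hg0, hgn, hg⟩ := h
  refine ⟨fun i => if i ≤ n then g i else T, by simp [hg0], by simp, fun i hi => ?_⟩
  rcases Nat.lt_succ_iff_lt_or_eq.mp hi with hi | rfl
  · simpa [hi.le, Nat.succ_le_of_lt hi] using hg i hi
  · simpa [hgn] using hT

lemma Splits.verts_nonempty {n : ℕ} {G K : ICG} (h : Splits n G K) (hG : G.verts.Nonempty) :
    K.verts.Nonempty := by
  obtain ⟨g, hg0, rfl, hg⟩ := h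
  cases n with
  | zero => rwa [hg0]
  | succ m =>
    obtain ⟨v, v1, v2, hs⟩ := permSplit_iff_exists_isSplitAt.mp (hg m m.lt_succ_self)
    exact ⟨v1, hs.fst_mem⟩

lemma verts_nonempty_of_step {H H' : ICG} (h : Recolor H H' ∨ PermSplit H H') :
    H.verts.Nonempty := by
  rcases h with hr | hs
  · obtain ⟨-, e₀, he₀, -⟩ := hr.exists_edge
    exact verts_nonempty_of_mem_edgeSet he₀
  · obtain ⟨v, v1, v2, hs⟩ := permSplit_iff_exists_isSplitAt.mp hs
    exact ⟨v, hs.mem⟩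

namespace ICG

section SplitAt

variable {K : ICG} {a a1 a2 : ℕ} {S : Set (Sym2 ℕ)} {e : Sym2 ℕ} {col : Color}

lemma unsplit_relabel_of_mem_edgeSet (h1 : a1 ∉ K.verts) (h2 : a2 ∉ K.verts)
    (he : e ∈ K.edgeSet) : (relabel a a1 a2 S e).map (unsplit a a1 a2) = e :=
  unsplit_relabel (fun h => h1 (mem_verts_of_mem_edgeSet he h))
    (fun h => h2 (mem_verts_of_mem_edgeSet he h))

lemma relabel_injOn (h1 : a1 ∉ K.verts) (h2 : a2 ∉ K.verts) :
    Set.InjOn (relabel a a1 a2 S) K.edgeSet := fun e he e' he' heq => by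
  rw [← unsplit_relabel_of_mem_edgeSet h1 h2 he, heq, unsplit_relabel_of_mem_edgeSet h1 h2 he']

lemma mem_verts_of_mem_relabel {x : ℕ} (he : e ∈ K.edgeSet) (hx : x ∈ relabel a a1 a2 S e) :
    x ∈ insert a1 (insert a2 (K.verts.erase a)) := by
  rcases mem_relabel hx with ⟨-, rfl⟩ | ⟨hx, hxa⟩
  · rcases copyFor_eq_or (a1 := a1) (a2 := a2) (S := S) (e := e) with h | h <;> simp [h]
  · simp [hxa, mem_verts_of_mem_edgeSet he hx]

lemma not_isDiag_relabel (h1 : a1 ∉ K.verts) (h2 : a2 ∉ K.verts) (he : e ∈ K.edgeSet) :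
    ¬ (relabel a a1 a2 S e).IsDiag := fun hd =>
  not_isDiag_of_mem_edgeSet he (unsplit_relabel_of_mem_edgeSet h1 h2 he ▸ hd.map)

noncomputable def splitAt (K : ICG) (a a1 a2 : ℕ) (S : Set (Sym2 ℕ)) (h1 : a1 ∉ K.verts)
    (h2 : a2 ∉ K.verts) : ICG where
  verts := insert a1 (insert a2 (K.verts.erase a))
  blue := K.blue.image (relabel a a1 a2 S)
  red := K.red.image (relabel a a1 a2 S)
  blue_mem := by
    simp only [Finset.forall_mem_image]
    exact fun e he _ => mem_verts_of_mem_relabel ⟨.blue, he⟩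
  red_mem := by
    simp only [Finset.forall_mem_image]
    exact fun e he _ => mem_verts_of_mem_relabel ⟨.red, he⟩
  blue_nd := by
    simp only [Finset.forall_mem_image]
    exact fun e he => not_isDiag_relabel h1 h2 ⟨.blue, he⟩
  red_nd := by
    simp only [Finset.forall_mem_image]
    exact fun e he => not_isDiag_relabel h1 h2 ⟨.red, he⟩
  disj := by
    simp only [Finset.disjoint_left, Finset.mem_image, not_exists, not_and]
    rintro _ ⟨e, he, rfl⟩ f hf hfe
    obtain rfl := relabel_injOn h1 h2 ⟨.red, hf⟩ ⟨.blue, he⟩ hfe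
    exact Finset.disjoint_left.mp K.disj he hf

variable {h1 : a1 ∉ K.verts} {h2 : a2 ∉ K.verts}

lemma mem_splitAt_edgesOf {e' : Sym2 ℕ} : e' ∈ (K.splitAt a a1 a2 S h1 h2).edgesOf col ↔
    ∃ e ∈ K.edgesOf col, relabel a a1 a2 S e = e' := by
  cases col <;> exact Finset.mem_image

lemma not_mem_splitAt_verts (ha : a ∈ K.verts) : a ∉ (K.splitAt a a1 a2 S h1 h2).verts := by
  simp [splitAt, ne_of_mem_of_not_mem ha h1, ne_of_mem_of_not_mem ha h2]

lemma isSplitAt_splitAt (ha : a ∈ K.verts) (h12 : a1 ≠ a2) :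
    IsSplitAt K (K.splitAt a a1 a2 S h1 h2) a a1 a2 where
  mem := ha
  fst_not_mem := h1
  snd_not_mem := h2
  fst_ne_snd := h12
  verts_eq := rfl
  mem_edgesOf_iff col u w hu hw hu1 hu2 hw1 hw2 := by
    rw [mem_splitAt_edgesOf]
    constructor
    · intro he
      exact ⟨_, he, relabel_of_not_mem (by simp [Sym2.mem_iff, hu.symm, hw.symm])⟩
    · rintro ⟨e, he, hrel⟩
      have h := unsplit_relabel_of_mem_edgeSet (a := a) (S := S) h1 h2 ⟨col, he⟩
      rw [hrel] at h
      simp only [Sym2.map_mk, unsplit, hu1, hu2, hw1, hw2, or_self, if_false] at h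
      rwa [h]
  edge_at col u hu := by
    have hua : u ≠ a := fun h => not_isDiag_of_mem_edgeSet ⟨col, hu⟩ (by simp [h])
    simp only [mem_splitAt_edgesOf]
    rcases copyFor_eq_or (a1 := a1) (a2 := a2) (S := S) (e := s(u, a)) with h | h
    exacts [.inl ⟨_, hu, by simp [relabel, hua, h]⟩, .inr ⟨_, hu, by simp [relabel, hua, h]⟩]

lemma isFold_splitAt : IsFold (unsplit a a1 a2) (K.splitAt a a1 a2 S h1 h2) K where
  map_mem col e' he' := by
    obtain ⟨e, he, rfl⟩ := mem_splitAt_edgesOf.mp he'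
    rwa [unsplit_relabel_of_mem_edgeSet h1 h2 ⟨col, he⟩]
  injOn := by
    rintro _ ⟨col₁, he₁'⟩ _ ⟨col₂, he₂'⟩ heq
    obtain ⟨e₁, he₁, rfl⟩ := mem_splitAt_edgesOf.mp he₁'
    obtain ⟨e₂, he₂, rfl⟩ := mem_splitAt_edgesOf.mp he₂'
    rw [unsplit_relabel_of_mem_edgeSet h1 h2 ⟨col₁, he₁⟩,
      unsplit_relabel_of_mem_edgeSet h1 h2 ⟨col₂, he₂⟩] at heq
    rw [heq]

lemma mem_core_of_mem_relabel (he : e ∈ K.edgeSet)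
    (hcore : ∀ x ∈ relabel a a1 a2 S e, x ∈ (K.splitAt a a1 a2 S h1 h2).core) :
    ∀ x ∈ e, x ∈ K.core := by
  simpa only [unsplit_relabel_of_mem_edgeSet h1 h2 he] using isFold_splitAt.map_mem_core hcore

lemma mem_of_snd_mem_relabel (h12 : a1 ≠ a2) (h2 : a2 ∉ K.verts) (he : e ∈ K.edgeSet)
    (ha2 : a2 ∈ relabel a a1 a2 S e) : e ∈ S := by
  rcases mem_relabel ha2 with ⟨-, h⟩ | ⟨h, -⟩
  · by_contra hS
    exact h12 (h.trans (copyFor_of_not_mem hS)).symm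
  · exact absurd (mem_verts_of_mem_edgeSet he h) h2

lemma snd_not_mem_core (h12 : a1 ≠ a2) (hS : S.Subsingleton) :
    a2 ∉ (K.splitAt a a1 a2 S h1 h2).core := by
  rintro ⟨e₁', ⟨col₁, he₁'⟩, e₂', ⟨col₂, he₂'⟩, hne, h₁, h₂⟩
  obtain ⟨e₁, he₁, rfl⟩ := mem_splitAt_edgesOf.mp he₁'
  obtain ⟨e₂, he₂, rfl⟩ := mem_splitAt_edgesOf.mp he₂'
  exact hne (congrArg _ (hS (mem_of_snd_mem_relabel h12 h2 ⟨_, he₁⟩ h₁)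
    (mem_of_snd_mem_relabel h12 h2 ⟨_, he₂⟩ h₂)))

lemma injOn_unsplit (h12 : a1 ≠ a2) (hS : S.Subsingleton) :
    Set.InjOn (unsplit a a1 a2) (K.splitAt a a1 a2 S h1 h2).core := by
  intro x hx y hy hxy
  have hx2 : x ≠ a2 := fun h => snd_not_mem_core h12 hS (h ▸ hx)
  have hy2 : y ≠ a2 := fun h => snd_not_mem_core h12 hS (h ▸ hy)
  have hx' := core_subset_verts hx
  have hy' := core_subset_verts hy
  simp only [splitAt, Finset.mem_coe, Finset.mem_insert, Finset.mem_erase] at hx' hy'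
  simp only [unsplit] at hxy
  grind

lemma mem_core_splitAt {x : ℕ} (ha : a ∈ K.verts) (hx : x ∈ (K.splitAt a a1 a2 S h1 h2).core) :
    x = a1 ∨ x = a2 ∨ (x ∈ K.core ∧ x ≠ a) := by
  by_cases hx1 : x = a1
  · exact .inl hx1
  by_cases hx2 : x = a2
  · exact .inr (.inl hx2)
  refine .inr (.inr ⟨?_, ne_of_mem_of_not_mem (core_subset_verts hx) (not_mem_splitAt_verts ha)⟩)
  simpa [unsplit, hx1, hx2] using isFold_splitAt.mapsTo_core hx

end SplitAt

end ICG

lemma CoreEmbedding.splitAt {φ : ℕ → ℕ} {K H : ICG} {a a1 a2 : ℕ} {S : Set (Sym2 ℕ)}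
    {h1 : a1 ∉ K.verts} {h2 : a2 ∉ K.verts} (hφ : CoreEmbedding φ K H) (h12 : a1 ≠ a2)
    (hS : S.Subsingleton) :
    CoreEmbedding (φ ∘ unsplit a a1 a2) (K.splitAt a a1 a2 S h1 h2) H :=
  hφ.comp isFold_splitAt (injOn_unsplit h12 hS)

def liftSplit (φ : ℕ → ℕ) (a1 a2 v1 v2 x : ℕ) : ℕ :=
  if x = a1 then v1 else if x = a2 then v2 else φ x

lemma liftSplit_of_ne {φ : ℕ → ℕ} {a1 a2 v1 v2 x : ℕ} (h1 : x ≠ a1) (h2 : x ≠ a2) :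
    liftSplit φ a1 a2 v1 v2 x = φ x := by
  simp [liftSplit, h1, h2]

lemma injOn_liftSplit {φ : ℕ → ℕ} {a1 a2 v1 v2 : ℕ} {s : Set ℕ} (hφ : Set.InjOn φ s)
    (hv1 : ∀ x ∈ s, φ x ≠ v1) (hv2 : ∀ x ∈ s, φ x ≠ v2) (hv12 : v1 ≠ v2) (ha1 : a1 ∉ s)
    (ha2 : a2 ∉ s) (h12 : a1 ≠ a2) :
    Set.InjOn (liftSplit φ a1 a2 v1 v2) (insert a1 (insert a2 s)) := by
  have heq : Set.EqOn φ (liftSplit φ a1 a2 v1 v2) s := fun x hx =>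
    (liftSplit_of_ne (ne_of_mem_of_not_mem hx ha1) (ne_of_mem_of_not_mem hx ha2)).symm
  rw [Set.injOn_insert (by simp [h12, ha1]), Set.injOn_insert ha2]
  refine ⟨⟨hφ.congr heq, ?_⟩, ?_⟩
  · rintro ⟨x, hx, hxv⟩
    rw [← heq hx] at hxv
    exact hv2 x hx (by simpa [liftSplit, h12.symm] using hxv)
  · rintro ⟨x, rfl | hx, hxv⟩
    · exact hv12 (by simpa [liftSplit, h12.symm] using hxv.symm)
    · rw [← heq hx] at hxv
      exact hv1 x hx (by simpa [liftSplit] using hxv)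

def edgesToSecondCopy (φ : ℕ → ℕ) (a v1 : ℕ) (K H' : ICG) : Set (Sym2 ℕ) :=
  {e | ∃ col, e ∈ K.edgesOf col ∧ e.map (Function.update φ a v1) ∉ H'.edgesOf col}

namespace CoreEmbedding

variable {φ : ℕ → ℕ} {K H H' : ICG} {v v1 v2 a a1 a2 : ℕ} {col : Color} {e : Sym2 ℕ}

lemma exists_permSplit (hφ : CoreEmbedding φ K H) (hK : K.verts.Nonempty) :
    ∃ ψ T, PermSplit K T ∧ CoreEmbedding ψ T H := by
  obtain ⟨a, ha⟩ := hK
  obtain ⟨a1, a2, h1, h2, h12⟩ := K.verts.exists_two_not_mem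
  exact ⟨_, K.splitAt a a1 a2 ∅ h1 h2, (isSplitAt_splitAt ha h12).permSplit,
    hφ.splitAt h12 Set.subsingleton_empty⟩

lemma exists_mem_of_map_eq (hφ : CoreEmbedding φ K H) (hK : K.verts.Nonempty) (e₀ : Sym2 ℕ) :
    ∃ a ∈ K.verts, ∀ e : Sym2 ℕ, (∀ x ∈ e, x ∈ K.core) → e.map φ = e₀ → a ∈ e := by
  by_cases h : ∃ b ∈ K.core, φ b ∈ e₀
  · obtain ⟨b, hb, hbe⟩ := h
    refine ⟨b, core_subset_verts hb, fun e he hmap => ?_⟩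
    obtain ⟨x, hx, hxb⟩ := Sym2.mem_map.mp (hmap ▸ hbe)
    exact hφ.injOn (he x hx) hb hxb ▸ hx
  · obtain ⟨a, ha⟩ := hK
    refine ⟨a, ha, fun e he hmap => absurd ?_ h⟩
    exact ⟨_, he _ (Sym2.out_fst_mem e), hmap ▸ Sym2.mem_map.mpr ⟨_, Sym2.out_fst_mem e, rfl⟩⟩

/-- Split a core vertex mapped into the recoloured edge `e₀` (any vertex if there is none), moving
the unique core edge mapped onto `e₀` to the second copy: that copy then lies on one edge only, so
no edge between core vertices is mapped onto `e₀` any more. -/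
lemma exists_permSplit_of_recolor (hφ : CoreEmbedding φ K H) (hK : K.verts.Nonempty)
    (hr : Recolor H H') : ∃ ψ T, PermSplit K T ∧ CoreEmbedding ψ T H' := by
  obtain ⟨hV, e₀, -, he₀⟩ := hr.exists_edge
  obtain ⟨a, ha, hae⟩ := hφ.exists_mem_of_map_eq hK e₀
  obtain ⟨a1, a2, h1, h2, h12⟩ := K.verts.exists_two_not_mem
  set S := {e : Sym2 ℕ | (∀ x ∈ e, x ∈ K.core) ∧ e.map φ = e₀}
  have hS : S.Subsingleton := fun e he e' he' =>
    hφ.injOn.sym2_map he.1 he'.1 (he.2.trans he'.2.symm)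
  have hT := hφ.splitAt (h1 := h1) (h2 := h2) (a := a) h12 hS
  refine ⟨_, _, (isSplitAt_splitAt ha h12).permSplit, hT.retarget (hV ▸ hT.mapsTo) ?_⟩
  intro col e' he' hcore hmem
  refine he₀ col _ hmem fun heq => ?_
  obtain ⟨e, he, rfl⟩ := mem_splitAt_edgesOf.mp he'
  rw [← Sym2.map_map, unsplit_relabel_of_mem_edgeSet h1 h2 ⟨col, he⟩] at heq
  have hecore := mem_core_of_mem_relabel ⟨col, he⟩ hcore
  have ha2 := copyFor_mem_relabel (a1 := a1) (a2 := a2) (S := S) (hae e hecore heq)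
  rw [copyFor_of_mem (show e ∈ S from ⟨hecore, heq⟩)] at ha2
  exact snd_not_mem_core h12 hS (hcore a2 ha2)

/-- An edge at `a` goes to the copy `a1 ↦ v1` when its image with `v` replaced by `v1` keeps its
colour in `H'`, and otherwise to `a2 ↦ v2`, where the permissive split of `v` has put that image. -/
lemma map_relabel_mem_of_isSplitAt (hφ : CoreEmbedding φ K H) (hs : IsSplitAt H H' v v1 v2)
    (ha : a ∈ K.core) (hφa : φ a = v) (h1 : a1 ∉ K.verts) (h2 : a2 ∉ K.verts) (h12 : a1 ≠ a2)
    (he : e ∈ K.edgesOf col) (hcore : ∀ x ∈ e, x ∈ K.core) :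
    (relabel a a1 a2 (edgesToSecondCopy φ a v1 K H') e).map (liftSplit φ a1 a2 v1 v2) ∈
      H'.edgesOf col := by
  rw [map_relabel (φ := φ) fun x hx _ => by
    have hxK := mem_verts_of_mem_edgeSet ⟨col, he⟩ hx
    exact liftSplit_of_ne (ne_of_mem_of_not_mem hxK h1) (ne_of_mem_of_not_mem hxK h2)]
  by_cases hae : a ∈ e
  · obtain ⟨d, rfl⟩ := Sym2.mem_iff_exists.mp hae
    have hda : d ≠ a := fun h => not_isDiag_of_mem_edgeSet ⟨col, he⟩ (by simp [h])
    have himage : s(φ d, v) ∈ H.edgesOf col := by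
      simpa [hφa, Sym2.eq_swap] using hφ.map_mem col _ he hcore
    by_cases hsecond : s(a, d) ∈ edgesToSecondCopy φ a v1 K H'
    · rw [copyFor_of_mem hsecond]
      obtain ⟨col', he', hnot⟩ := hsecond
      obtain rfl := eq_of_mem_edgesOf he' he
      simp only [Sym2.map_mk, Function.update_self, Function.update_of_ne hda] at hnot ⊢
      rcases hs.edge_at col' _ himage with h | h
      · exact absurd (Sym2.eq_swap ▸ h) hnot
      · simpa [liftSplit, h12.symm, Sym2.eq_swap] using h
    · rw [copyFor_of_not_mem hsecond]
      simp only [edgesToSecondCopy, Set.mem_ofPred_eq, not_exists, not_and, not_not] at hsecond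
      simpa [liftSplit] using hsecond col he
  · rw [Sym2.map_congr (g := φ) fun x hx =>
      Function.update_of_ne (ne_of_mem_of_not_mem hx hae) _ _]
    refine hs.mem_edgesOf_of_not_mem (hφ.map_mem col e he hcore) fun hv => ?_
    obtain ⟨x, hx, hxv⟩ := Sym2.mem_map.mp hv
    exact ne_of_mem_of_not_mem hx hae (hφ.injOn (hcore x hx) ha (hxv.trans hφa.symm))

lemma exists_permSplit_of_isSplitAt_of_mem_core (hφ : CoreEmbedding φ K H)
    (hs : IsSplitAt H H' v v1 v2) (ha : a ∈ K.core) (hφa : φ a = v) :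
    ∃ ψ T, PermSplit K T ∧ CoreEmbedding ψ T H' := by
  obtain ⟨a1, a2, h1, h2, h12⟩ := K.verts.exists_two_not_mem
  set T := K.splitAt a a1 a2 (edgesToSecondCopy φ a v1 K H') h1 h2
  have haK := core_subset_verts ha
  have hφv : ∀ x ∈ K.core, x ≠ a → φ x ≠ v := fun x hx hxa h =>
    hxa (hφ.injOn hx ha (h.trans hφa.symm))
  have hv1 : ∀ x ∈ K.core, φ x ≠ v1 := fun x hx =>
    ne_of_mem_of_not_mem (hφ.mapsTo hx) hs.fst_not_mem
  have hv2 : ∀ x ∈ K.core, φ x ≠ v2 := fun x hx =>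
    ne_of_mem_of_not_mem (hφ.mapsTo hx) hs.snd_not_mem
  refine ⟨liftSplit φ a1 a2 v1 v2, T, (isSplitAt_splitAt haK h12).permSplit, ?_, ?_, ?_⟩
  · intro x hx
    rcases mem_core_splitAt haK hx with rfl | rfl | ⟨hxK, hxa⟩
    · simpa [liftSplit] using hs.fst_mem
    · simpa [liftSplit, h12.symm] using hs.snd_mem
    · rw [Finset.mem_coe, liftSplit_of_ne (ne_of_mem_of_not_mem (core_subset_verts hxK) h1)
        (ne_of_mem_of_not_mem (core_subset_verts hxK) h2)]
      exact hs.mem_verts_of_ne (hφ.mapsTo hxK) (hφv x hxK hxa)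
  · refine (injOn_liftSplit hφ.injOn hv1 hv2 hs.fst_ne_snd (fun h => h1 (core_subset_verts h))
      (fun h => h2 (core_subset_verts h)) h12).mono fun x hx => ?_
    rcases mem_core_splitAt haK hx with rfl | rfl | ⟨hxK, -⟩ <;> simp [*]
  · intro col e' he' hcore
    obtain ⟨e, he, rfl⟩ := mem_splitAt_edgesOf.mp he'
    exact hφ.map_relabel_mem_of_isSplitAt hs ha hφa h1 h2 h12 he
      (mem_core_of_mem_relabel ⟨col, he⟩ hcore)

lemma exists_permSplit_of_permSplit (hφ : CoreEmbedding φ K H) (hK : K.verts.Nonempty)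
    (hs : PermSplit H H') : ∃ ψ T, PermSplit K T ∧ CoreEmbedding ψ T H' := by
  obtain ⟨v, v1, v2, hs⟩ := permSplit_iff_exists_isSplitAt.mp hs
  by_cases h : ∃ a ∈ K.core, φ a = v
  · obtain ⟨a, ha, hφa⟩ := h
    exact hφ.exists_permSplit_of_isSplitAt_of_mem_core hs ha hφa
  · push Not at h
    refine (hφ.retarget (fun x hx => hs.mem_verts_of_ne (hφ.mapsTo hx) (h x hx))
      fun col e _ hcore hmem => hs.mem_edgesOf_of_not_mem hmem fun hv => ?_).exists_permSplit hK
    obtain ⟨x, hx, hxv⟩ := Sym2.mem_map.mp hv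
    exact h x (hcore x hx) hxv

lemma exists_permSplit_of_step (hφ : CoreEmbedding φ K H) (hK : K.verts.Nonempty)
    (hstep : Recolor H H' ∨ PermSplit H H') : ∃ ψ T, PermSplit K T ∧ CoreEmbedding ψ T H' :=
  hstep.elim (hφ.exists_permSplit_of_recolor hK) (hφ.exists_permSplit_of_permSplit hK)

end CoreEmbedding

theorem stmt1 (G : ICG) (k : ℕ)
    (h : ∃ G', MixedSeq k G G' ∧ ¬ HasErrCycle G') :
    ∃ G', Splits k G G' ∧ ¬ HasErrCycle G' := by
  obtain ⟨G', ⟨f, hf0, hfk, hstep⟩, hG'⟩ := h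
  have key : ∀ n ≤ k, ∃ K φ, Splits n G K ∧ CoreEmbedding φ K (f n) := by
    intro n
    induction n with
    | zero => exact fun _ => ⟨G, id, ⟨fun _ => G, rfl, rfl, by simp⟩, hf0 ▸ CoreEmbedding.id G⟩
    | succ n ih =>
      intro hn
      obtain ⟨K, φ, hK, hφ⟩ := ih (by omega)
      have hG : G.verts.Nonempty := hf0 ▸ verts_nonempty_of_step (hstep 0 (by omega))
      obtain ⟨ψ, T, hT, hψ⟩ :=
        hφ.exists_permSplit_of_step (hK.verts_nonempty hG) (hstep n (by omega))
      exact ⟨T, ψ, hK.snoc hT, hψ⟩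
  obtain ⟨K, φ, hK, hφ⟩ := key k le_rfl
  exact ⟨K, hK, fun hcyc => hG' (hfk ▸ hcyc.of_coreEmbedding hφ)⟩
end

section
/- Let G = (V, B, R) be an incomplete correlation graph and k ≥ 0 an integer. Let H = (V, E') be the simple graph with E' = B, and let S = R be the set of terminal pairs. Then G can be clustered by a sequence of at most k permissive vertex splits if and only if the Multicut with Vertex Splitting instance (H, S, k) admits a sequence of at most k exclusive vertex splits separating every surviving terminal pair. -/
structure SG where
  verts : Finset ℕ
  edges : Finset (Sym2 ℕ)
  edges_mem : ∀ e ∈ edges, ∀ x ∈ e, x ∈ verts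
  edges_nd : ∀ e ∈ edges, ¬ e.IsDiag

/-- One exclusive vertex split, on a state consisting of the current graph together
with the set of vertex names used so far (to guarantee freshness of new vertices). -/
def ExclStep (p q : SG × Finset ℕ) : Prop :=
  ∃ v v1 v2 : ℕ, v ∈ p.1.verts ∧ v1 ∉ p.2 ∧ v2 ∉ p.2 ∧ v1 ∉ p.1.verts ∧ v2 ∉ p.1.verts ∧
    v1 ≠ v2 ∧
    q.2 = insert v1 (insert v2 p.2) ∧
    q.1.verts = insert v1 (insert v2 (p.1.verts.erase v)) ∧
    (∀ u w : ℕ, u ≠ v → w ≠ v → u ≠ v1 → u ≠ v2 → w ≠ v1 → w ≠ v2 →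
      (s(u,w) ∈ p.1.edges ↔ s(u,w) ∈ q.1.edges)) ∧
    (∀ u : ℕ, s(u,v) ∈ p.1.edges ↔ (s(u,v1) ∈ q.1.edges ∨ s(u,v2) ∈ q.1.edges)) ∧
    (∀ u : ℕ, ¬ (s(u,v1) ∈ q.1.edges ∧ s(u,v2) ∈ q.1.edges))

def Reach (H : SG) (x y : ℕ) : Prop :=
  Relation.ReflTransGen (fun a b => s(a,b) ∈ H.edges) x y

/-- A solution of the Multicut with Vertex Splitting instance `(H, S, k)`:
a sequence of at most `k` exclusive vertex splits after which every terminal pair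
both of whose endpoints are unsplit (i.e., still present) lies in different
connected components. -/
def MCSolution (H : SG) (S : Finset (Sym2 ℕ)) (k : ℕ) : Prop :=
  ∃ (n : ℕ) (f : ℕ → SG × Finset ℕ), n ≤ k ∧ f 0 = (H, H.verts) ∧
    (∀ i < n, ExclStep (f i) (f (i+1))) ∧
    ∀ e ∈ S, ∀ x y : ℕ, e = s(x,y) →
      x ∈ (f n).1.verts → y ∈ (f n).1.verts → ¬ Reach (f n).1 x y


/-!
A split of `v` into `v1, v2` is undone by `parent v v1 v2`, which sends `v1, v2` to `v` and fixes
every other vertex. An exclusive split is exactly a step with fresh names whose edges before it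
are the images under this map of the edges after it, and which is exclusive; every step whose
blue and red edges before it are the images of those after it is a permissive split. A sequence
of splits is tracked by the composed ancestor maps.

(⇒) After each permissive split keep, of the blue edges, one preimage of every edge kept so far:
at the split vertex, the edge to `v1` when there is one and the edge to `v2` otherwise. These
kept edges form an exclusive split sequence of `H`, once the copies made at step `t` are renamed
`N + 2t` and `N + 2t + 1` to make them globally fresh. If a terminal pair `xy` with both ends
unsplit were connected at the end, it would still be a red edge and would be joined by a blue
path: an erroneous cycle.

(⇐) A correlation graph on the final vertex set whose blue and red edges map onto those of `G`
under the composed ancestor map pulls back along the intermediate ancestor maps to a sequence of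
permissive splits of `G`. Take the final multicut graph, with the descendants of every original
vertex whose descendants all lie in one component merged into one hub; this does not change
connectivity. A red edge `xy` is placed between two descendants of `x` and `y` in different
components if there are any. Otherwise one end, say `y`, was split, since unsplit terminal pairs
are separated; then its descendants were merged, and the red edge is attached to a descendant of
`y` other than the hub, which has no blue edge at all.
-/

open Finset Relation

section compRange

variable {α : Type*} (f : ℕ → α → α)

def compRange : ℕ → ℕ → α → α
  | _, 0 => id
  | s, m + 1 => f s ∘ compRange (s + 1) m

@[simp] lemma compRange_zero (s : ℕ) : compRange f s 0 = id := rfl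

lemma compRange_succ (s m : ℕ) : compRange f s (m + 1) = f s ∘ compRange f (s + 1) m := rfl

lemma compRange_add (s m k : ℕ) :
    compRange f s (m + k) = compRange f s m ∘ compRange f (s + m) k := by
  induction m generalizing s with
  | zero => simp
  | succ m ih =>
    rw [show m + 1 + k = m + k + 1 by omega, compRange_succ, ih, compRange_succ,
      show s + 1 + m = s + (m + 1) by omega]
    rfl

lemma compRange_succ' (s m : ℕ) : compRange f s (m + 1) = compRange f s m ∘ f (s + m) := by
  rw [compRange_add]
  rfl

lemma compRange_sub {t n : ℕ} (ht : t < n) :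
    compRange f t (n - t) = f t ∘ compRange f (t + 1) (n - (t + 1)) := by
  rw [show n - t = n - (t + 1) + 1 by omega, compRange_succ]

lemma compRange_zero_comp_sub {t n : ℕ} (ht : t ≤ n) :
    compRange f 0 t ∘ compRange f t (n - t) = compRange f 0 n := by
  have h := compRange_add f 0 t (n - t)
  rw [zero_add, Nat.add_sub_cancel' ht] at h
  exact h.symm

lemma sym2Map_compRange (s m : ℕ) :
    Sym2.map (compRange f s m) = compRange (fun t => Sym2.map (f t)) s m := by
  induction m generalizing s with
  | zero => exact Sym2.map_id
  | succ m ih => rw [compRange_succ, compRange_succ, Sym2.map_comp, ih]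

lemma image_compRange [DecidableEq α] {A : ℕ → Finset α} {s m : ℕ}
    (h : ∀ t, s ≤ t → t < s + m → A t = (A (t + 1)).image (f t)) :
    A s = (A (s + m)).image (compRange f s m) := by
  induction m generalizing s with
  | zero => simp
  | succ m ih =>
    rw [h s le_rfl (by omega), ih fun t h₁ h₂ => h t (by omega) (by omega), image_image,
      compRange_succ, show s + 1 + m = s + (m + 1) by omega]

end compRange

lemma Nat.exists_lt_and_not_succ {P : ℕ → Prop} :
    ∀ {n : ℕ}, P 0 → ¬ P n → ∃ t < n, P t ∧ ¬ P (t + 1)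
  | 0, h0, hn => absurd h0 hn
  | n + 1, h0, hn => by
    by_cases h : P n
    · exact ⟨n, n.lt_succ_self, h, hn⟩
    · obtain ⟨t, ht, h1, h2⟩ := Nat.exists_lt_and_not_succ h0 h
      exact ⟨t, by omega, h1, h2⟩

lemma exists_seq_triple_of_forall_lt {P : ℕ → ℕ → ℕ → ℕ → Prop} {n : ℕ}
    (h : ∀ i < n, ∃ a b c, P i a b c) :
    ∃ a b c : ℕ → ℕ, ∀ i < n, P i (a i) (b i) (c i) := by
  have h' : ∀ i, ∃ a b c, i < n → P i a b c := fun i => by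
    by_cases hi : i < n
    · obtain ⟨a, b, c, hP⟩ := h i hi
      exact ⟨a, b, c, fun _ => hP⟩
    · exact ⟨0, 0, 0, fun h => absurd h hi⟩
  choose a b c hP using h'
  exact ⟨a, b, c, hP⟩

lemma ne_of_mem_of_not_isDiag {E : Finset (Sym2 ℕ)} (hE : ∀ e ∈ E, ¬ e.IsDiag) {a b : ℕ}
    (h : s(a, b) ∈ E) : a ≠ b :=
  fun hab => hE _ h (Sym2.mk_isDiag_iff.2 hab)

lemma eq_of_reflTransGen_of_not_mem {E : Finset (Sym2 ℕ)} {a b : ℕ} (hb : ∀ e ∈ E, b ∉ e)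
    (h : ReflTransGen (Sym2.ToRel E) a b) : a = b := by
  rcases h.cases_tail with rfl | ⟨c, -, hcb⟩
  · rfl
  · exact absurd (Sym2.mem_mk_right c b) (hb _ hcb)

lemma mem_image_sym2Map_iff {V : Finset ℕ} {F : Finset (Sym2 ℕ)} {f : ℕ → ℕ}
    (hf : Set.InjOn f V) (hF : ∀ e ∈ F, ∀ x ∈ e, x ∈ V) {a b : ℕ} (ha : a ∈ V)
    (hb : b ∈ V) :
    s(f a, f b) ∈ F.image (Sym2.map f) ↔ s(a, b) ∈ F := by
  refine ⟨fun h => ?_, fun h => mem_image.2 ⟨_, h, Sym2.map_mk _ _ _⟩⟩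
  obtain ⟨e, he, heq⟩ := mem_image.1 h
  induction e using Sym2.ind with
  | _ x y =>
    have hx := hF _ he x (Sym2.mem_mk_left x y)
    have hy := hF _ he y (Sym2.mem_mk_right x y)
    rw [Sym2.map_mk] at heq
    rcases Sym2.eq_iff.1 heq with ⟨h1, h2⟩ | ⟨h1, h2⟩
    · rwa [hf hx ha h1, hf hy hb h2] at he
    · rwa [hf hx hb h1, hf hy ha h2, Sym2.eq_swap] at he

lemma exists_reflTransGen_of_reflTransGen_image {V : Finset ℕ} {F : Finset (Sym2 ℕ)}
    {f : ℕ → ℕ} (hf : Set.InjOn f V) (hF : ∀ e ∈ F, ∀ x ∈ e, x ∈ V) {a c : ℕ}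
    (ha : a ∈ V) (h : ReflTransGen (fun x y => s(x, y) ∈ F.image (Sym2.map f)) (f a) c) :
    ∃ b ∈ V, f b = c ∧ ReflTransGen (Sym2.ToRel F) a b := by
  induction h with
  | refl => exact ⟨a, ha, rfl, ReflTransGen.refl⟩
  | tail _ hcd ih =>
    obtain ⟨b, hb, rfl, hab⟩ := ih
    obtain ⟨e, he, heq⟩ := mem_image.1 hcd
    induction e using Sym2.ind with
    | _ x y =>
      have hx := hF _ he x (Sym2.mem_mk_left x y)
      have hy := hF _ he y (Sym2.mem_mk_right x y)
      rw [Sym2.map_mk] at heq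
      rcases Sym2.eq_iff.1 heq with ⟨h1, rfl⟩ | ⟨rfl, h1⟩
      · rw [hf hx hb h1] at he
        exact ⟨y, hy, rfl, hab.tail he⟩
      · rw [hf hy hb h1] at he
        exact ⟨x, hx, rfl, hab.tail (by rwa [Sym2.eq_swap] at he)⟩

lemma ICG.ext {G G' : ICG} (hv : G.verts = G'.verts) (hb : G.blue = G'.blue)
    (hr : G.red = G'.red) : G = G' := by
  cases G; cases G'; simp_all

lemma SG.ext {H H' : SG} (hv : H.verts = H'.verts) (he : H.edges = H'.edges) : H = H' := by
  cases H; cases H'; simp_all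

lemma Reach.symm {H : SG} {a b : ℕ} (h : Reach H a b) : Reach H b a :=
  Std.Symm.symm (r := ReflTransGen (Sym2.ToRel (H.edges : Set (Sym2 ℕ)))) a b h

lemma hasErrCycle_iff {G : ICG} :
    HasErrCycle G ↔ ∃ u v, s(u, v) ∈ G.red ∧ ReflTransGen (Sym2.ToRel G.blue) u v := by
  constructor
  · rintro ⟨l, u, v, -, hc, hh, hl, hr⟩
    have hne : l ≠ [] := by rintro rfl; simp at hh
    rw [List.head?_eq_some_head hne, Option.some_inj] at hh
    rw [List.getLast?_eq_some_getLast hne, Option.some_inj] at hl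
    exact ⟨u, v, hr, hh ▸ hl ▸ List.relationReflTransGen_of_exists_isChain l hc hne⟩
  · rintro ⟨u, v, hr, hb⟩
    have hreach : (SimpleGraph.fromEdgeSet (G.blue : Set (Sym2 ℕ))).Reachable u v := by
      rw [SimpleGraph.reachable_iff_reflTransGen]
      refine reflTransGen_closed (fun a b hab => ?_) u v hb
      by_cases hne : a = b
      · exact hne ▸ ReflTransGen.refl
      · exact ReflTransGen.single ((SimpleGraph.fromEdgeSet_adj _).2 ⟨hab, hne⟩)
    obtain ⟨p⟩ := hreach
    refine ⟨p.bypass.support, u, v, p.bypass_isPath.support_nodup,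
      p.bypass.isChain_adj_support.imp fun a b h => ((SimpleGraph.fromEdgeSet_adj _).1 h).1,
      by rw [← p.bypass.cons_tail_support]; rfl, ?_, hr⟩
    rw [List.getLast?_eq_some_getLast p.bypass.support_ne_nil,
      SimpleGraph.Walk.getLast_support]

def parent (v v1 v2 x : ℕ) : ℕ := if x = v1 ∨ x = v2 then v else x

section parent

variable {v v1 v2 u w : ℕ}

@[simp] lemma parent_left : parent v v1 v2 v1 = v := by simp [parent]

@[simp] lemma parent_right : parent v v1 v2 v2 = v := by simp [parent]

lemma parent_of_ne (h1 : u ≠ v1) (h2 : u ≠ v2) : parent v v1 v2 u = u := by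
  simp [parent, h1, h2]

lemma parent_eq_or (u : ℕ) :
    parent v v1 v2 u = v ∧ (u = v1 ∨ u = v2) ∨ parent v v1 v2 u = u := by
  unfold parent; split_ifs with h <;> simp [h]

lemma image_parent_split {V : Finset ℕ} (hv : v ∈ V) (hv1 : v1 ∉ V) (hv2 : v2 ∉ V) :
    (insert v1 (insert v2 (V.erase v))).image (parent v v1 v2) = V := by
  ext x
  simp only [mem_image, mem_insert, mem_erase]
  constructor
  · rintro ⟨y, rfl | rfl | ⟨-, hy⟩, rfl⟩
    · simpa using hv
    · simpa using hv
    · rwa [parent_of_ne (by rintro rfl; exact hv1 hy) (by rintro rfl; exact hv2 hy)]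
  · intro hx
    by_cases hxv : x = v
    · exact ⟨v1, Or.inl rfl, by simp [hxv]⟩
    · exact ⟨x, Or.inr (Or.inr ⟨hxv, hx⟩),
        parent_of_ne (by rintro rfl; exact hv1 hx) (by rintro rfl; exact hv2 hx)⟩

lemma not_mem_of_mem_split {V : Finset ℕ} {E : Finset (Sym2 ℕ)} (hv : v ∈ V) (hv1 : v1 ∉ V)
    (hv2 : v2 ∉ V) (hE : ∀ e ∈ E, ∀ x ∈ e, x ∈ insert v1 (insert v2 (V.erase v))) :
    ∀ e ∈ E, v ∉ e := by
  intro e he hve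
  have := hE e he v hve
  simp only [mem_insert, mem_erase, ne_eq, not_true_eq_false, false_and, or_false] at this
  rcases this with rfl | rfl
  exacts [hv1 hv, hv2 hv]

variable {E : Finset (Sym2 ℕ)}

lemma mem_image_parent_of_mem (hu1 : u ≠ v1) (hu2 : u ≠ v2) (hw1 : w ≠ v1) (hw2 : w ≠ v2)
    (h : s(u, w) ∈ E) : s(u, w) ∈ E.image (Sym2.map (parent v v1 v2)) :=
  mem_image.2 ⟨_, h, by rw [Sym2.map_mk, parent_of_ne hu1 hu2, parent_of_ne hw1 hw2]⟩

lemma mem_of_mem_image_parent (hu : u ≠ v) (hw : w ≠ v)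
    (h : s(u, w) ∈ E.image (Sym2.map (parent v v1 v2))) : s(u, w) ∈ E := by
  obtain ⟨e, he, heq⟩ := mem_image.1 h
  induction e using Sym2.ind with
  | _ a b =>
    have fix : ∀ x, parent v v1 v2 x ≠ v → parent v v1 v2 x = x := fun x hx =>
      (parent_eq_or x).resolve_left fun h => hx h.1
    rw [Sym2.map_mk] at heq
    rcases Sym2.eq_iff.1 heq with ⟨ha, hb⟩ | ⟨ha, hb⟩
    · rwa [← fix a (ha ▸ hu), ← fix b (hb ▸ hw), ha, hb] at he
    · rwa [← fix a (ha ▸ hw), ← fix b (hb ▸ hu), ha, hb, Sym2.eq_swap] at he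

lemma mem_split_of_mem_image_parent (hvE : ∀ e ∈ E, v ∉ e) (hu : u ≠ v)
    (h : s(u, v) ∈ E.image (Sym2.map (parent v v1 v2))) :
    s(u, v1) ∈ E ∨ s(u, v2) ∈ E := by
  obtain ⟨e, he, heq⟩ := mem_image.1 h
  have key : ∀ a b, s(a, b) ∈ E → parent v v1 v2 a = u → parent v v1 v2 b = v →
      s(u, v1) ∈ E ∨ s(u, v2) ∈ E := by
    intro a b hab ha hb
    have ha' : a = u := ha ▸ ((parent_eq_or a).resolve_left fun h => hu (ha ▸ h.1)).symm
    rcases parent_eq_or (v := v) (v1 := v1) (v2 := v2) b with ⟨-, rfl | rfl⟩ | hb'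
    · exact Or.inl (ha' ▸ hab)
    · exact Or.inr (ha' ▸ hab)
    · rw [hb'] at hb
      exact (hvE _ hab (hb ▸ Sym2.mem_mk_right a b)).elim
  induction e using Sym2.ind with
  | _ a b =>
    rw [Sym2.map_mk] at heq
    rcases Sym2.eq_iff.1 heq with ⟨ha, hb⟩ | ⟨ha, hb⟩
    · exact key a b he ha hb
    · exact key b a (by rwa [Sym2.eq_swap]) hb ha

end parent

def stepParent (v v1 v2 : ℕ → ℕ) (t : ℕ) : ℕ → ℕ := parent (v t) (v1 t) (v2 t)

lemma permSplit_of_image_parent {G G' : ICG} {v v1 v2 : ℕ} (hv : v ∈ G.verts)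
    (hv1 : v1 ∉ G.verts) (hv2 : v2 ∉ G.verts) (h12 : v1 ≠ v2)
    (hV : G'.verts = insert v1 (insert v2 (G.verts.erase v)))
    (hB : G.blue = G'.blue.image (Sym2.map (parent v v1 v2)))
    (hR : G.red = G'.red.image (Sym2.map (parent v v1 v2))) : PermSplit G G' := by
  refine ⟨v, v1, v2, hv, hv1, hv2, h12, hV, fun u w hu hw hu1 hu2 hw1 hw2 => ?_,
    fun u hu => ?_, fun u hu => ?_⟩
  · rw [hB, hR]
    exact ⟨⟨mem_of_mem_image_parent hu hw, mem_image_parent_of_mem hu1 hu2 hw1 hw2⟩,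
      ⟨mem_of_mem_image_parent hu hw, mem_image_parent_of_mem hu1 hu2 hw1 hw2⟩⟩
  · have huv := ne_of_mem_of_not_isDiag G.blue_nd hu
    rw [hB] at hu
    exact mem_split_of_mem_image_parent
      (not_mem_of_mem_split hv hv1 hv2 (hV ▸ G'.blue_mem)) huv hu
  · have huv := ne_of_mem_of_not_isDiag G.red_nd hu
    rw [hR] at hu
    exact mem_split_of_mem_image_parent
      (not_mem_of_mem_split hv hv1 hv2 (hV ▸ G'.red_mem)) huv hu

lemma exclStep_of_image_parent {p q : SG × Finset ℕ} {v v1 v2 : ℕ} (hv : v ∈ p.1.verts)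
    (hu1 : v1 ∉ p.2) (hu2 : v2 ∉ p.2) (hw1 : v1 ∉ p.1.verts) (hw2 : v2 ∉ p.1.verts)
    (h12 : v1 ≠ v2) (hU : q.2 = insert v1 (insert v2 p.2))
    (hV : q.1.verts = insert v1 (insert v2 (p.1.verts.erase v)))
    (hE : p.1.edges = q.1.edges.image (Sym2.map (parent v v1 v2)))
    (hexcl : ∀ u, ¬ (s(u, v1) ∈ q.1.edges ∧ s(u, v2) ∈ q.1.edges)) : ExclStep p q := by
  refine ⟨v, v1, v2, hv, hu1, hu2, hw1, hw2, h12, hU, hV,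
    fun u w hu hw hu1 hu2 hw1 hw2 => ?_, fun u => ⟨fun h => ?_, fun h => ?_⟩, hexcl⟩
  · rw [hE]
    exact ⟨mem_of_mem_image_parent hu hw, mem_image_parent_of_mem hu1 hu2 hw1 hw2⟩
  · have huv := ne_of_mem_of_not_isDiag p.1.edges_nd h
    rw [hE] at h
    exact mem_split_of_mem_image_parent
      (not_mem_of_mem_split hv hw1 hw2 (hV ▸ q.1.edges_mem)) huv h
  · have h12E : s(v1, v2) ∉ q.1.edges := fun h' =>
      p.1.edges_nd _ (hE ▸ mem_image_of_mem _ h') (by simp [Sym2.map_mk])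
    have hu12 : u ≠ v1 ∧ u ≠ v2 := by
      rcases h with h | h
      · exact ⟨ne_of_mem_of_not_isDiag q.1.edges_nd h,
          by rintro rfl; exact h12E (by rwa [Sym2.eq_swap])⟩
      · exact ⟨by rintro rfl; exact h12E h, ne_of_mem_of_not_isDiag q.1.edges_nd h⟩
    rw [hE]
    rcases h with h | h <;>
      exact mem_image.2 ⟨_, h, by rw [Sym2.map_mk, parent_of_ne hu12.1 hu12.2]; simp⟩

structure PermSplitAt (G G' : ICG) (v v1 v2 : ℕ) : Prop where
  mem : v ∈ G.verts
  fresh1 : v1 ∉ G.verts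
  fresh2 : v2 ∉ G.verts
  ne : v1 ≠ v2
  verts_eq : G'.verts = insert v1 (insert v2 (G.verts.erase v))
  keep : ∀ u w : ℕ, u ≠ v → w ≠ v → u ≠ v1 → u ≠ v2 → w ≠ v1 → w ≠ v2 →
    ((s(u,w) ∈ G.blue ↔ s(u,w) ∈ G'.blue) ∧ (s(u,w) ∈ G.red ↔ s(u,w) ∈ G'.red))
  blue_cover : ∀ u : ℕ, s(u,v) ∈ G.blue → s(u,v1) ∈ G'.blue ∨ s(u,v2) ∈ G'.blue
  red_cover : ∀ u : ℕ, s(u,v) ∈ G.red → s(u,v1) ∈ G'.red ∨ s(u,v2) ∈ G'.red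

lemma PermSplit.exists_at {G G' : ICG} (h : PermSplit G G') :
    ∃ v v1 v2, PermSplitAt G G' v v1 v2 :=
  let ⟨v, v1, v2, h1, h2, h3, h4, h5, h6, h7, h8⟩ := h
  ⟨v, v1, v2, h1, h2, h3, h4, h5, h6, h7, h8⟩

lemma PermSplitAt.ne_of_mem {G G' : ICG} {v v1 v2 x : ℕ} (h : PermSplitAt G G' v v1 v2)
    (hx : x ∈ G.verts) : x ≠ v1 ∧ x ≠ v2 :=
  ⟨fun h' => h.fresh1 (h' ▸ hx), fun h' => h.fresh2 (h' ▸ hx)⟩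

structure ExclStepAt (p q : SG × Finset ℕ) (v v1 v2 : ℕ) : Prop where
  mem : v ∈ p.1.verts
  unused1 : v1 ∉ p.2
  unused2 : v2 ∉ p.2
  fresh1 : v1 ∉ p.1.verts
  fresh2 : v2 ∉ p.1.verts
  ne : v1 ≠ v2
  used_eq : q.2 = insert v1 (insert v2 p.2)
  verts_eq : q.1.verts = insert v1 (insert v2 (p.1.verts.erase v))
  keep : ∀ u w : ℕ, u ≠ v → w ≠ v → u ≠ v1 → u ≠ v2 → w ≠ v1 → w ≠ v2 →
    (s(u,w) ∈ p.1.edges ↔ s(u,w) ∈ q.1.edges)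
  split : ∀ u : ℕ, s(u,v) ∈ p.1.edges ↔ (s(u,v1) ∈ q.1.edges ∨ s(u,v2) ∈ q.1.edges)
  excl : ∀ u : ℕ, ¬ (s(u,v1) ∈ q.1.edges ∧ s(u,v2) ∈ q.1.edges)

lemma ExclStep.exists_at {p q : SG × Finset ℕ} (h : ExclStep p q) :
    ∃ v v1 v2, ExclStepAt p q v v1 v2 :=
  let ⟨v, v1, v2, h1, h2, h3, h4, h5, h6, h7, h8, h9, h10, h11⟩ := h
  ⟨v, v1, v2, h1, h2, h3, h4, h5, h6, h7, h8, h9, h10, h11⟩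

namespace ExclStepAt

variable {p q : SG × Finset ℕ} {v v1 v2 : ℕ} (h : ExclStepAt p q v v1 v2)
include h

lemma ne_of_mem {x : ℕ} (hx : x ∈ p.1.verts) : x ≠ v1 ∧ x ≠ v2 :=
  ⟨fun h' => h.fresh1 (h' ▸ hx), fun h' => h.fresh2 (h' ▸ hx)⟩

lemma not_mem_verts : v ∉ q.1.verts := by
  rw [h.verts_eq]
  simp only [mem_insert, mem_erase, ne_eq, not_true_eq_false, false_and, or_false, not_or]
  exact h.ne_of_mem h.mem

lemma ne_of_mem_edge {x y : ℕ} (hxy : s(x, y) ∈ q.1.edges) : x ≠ v := fun h' =>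
  h.not_mem_verts (h' ▸ q.1.edges_mem _ hxy x (Sym2.mem_mk_left x y))

lemma new_not_adj : s(v1, v2) ∉ q.1.edges := fun h' =>
  h.fresh1 (p.1.edges_mem _ ((h.split v1).2 (Or.inr h')) v1 (Sym2.mem_mk_left _ _))

lemma mem_image_of_mem {x y : ℕ} (hxy : s(x, y) ∈ p.1.edges) (hxv : x ≠ v) :
    s(x, y) ∈ q.1.edges.image (Sym2.map (parent v v1 v2)) := by
  have hx := h.ne_of_mem (p.1.edges_mem _ hxy x (Sym2.mem_mk_left x y))
  have hy := h.ne_of_mem (p.1.edges_mem _ hxy y (Sym2.mem_mk_right x y))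
  by_cases hyv : y = v
  · subst hyv
    rcases (h.split x).1 hxy with h' | h' <;>
      exact mem_image.2 ⟨_, h', by rw [Sym2.map_mk, parent_of_ne hx.1 hx.2]; simp⟩
  · exact mem_image_parent_of_mem hx.1 hx.2 hy.1 hy.2
      ((h.keep x y hxv hyv hx.1 hx.2 hy.1 hy.2).1 hxy)

lemma map_parent_mem {a b : ℕ} (hab : s(a, b) ∈ q.1.edges) (ha1 : a ≠ v1) (ha2 : a ≠ v2) :
    s(parent v v1 v2 a, parent v v1 v2 b) ∈ p.1.edges := by
  rw [parent_of_ne ha1 ha2]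
  by_cases hb : b = v1 ∨ b = v2
  · rw [show parent v v1 v2 b = v by rcases hb with rfl | rfl <;> simp]
    exact (h.split a).2 (by rcases hb with rfl | rfl <;> simp [hab])
  · push Not at hb
    rw [parent_of_ne hb.1 hb.2]
    exact (h.keep a b (h.ne_of_mem_edge hab) (h.ne_of_mem_edge (Sym2.eq_swap ▸ hab)) ha1 ha2
      hb.1 hb.2).2 hab

lemma edges_eq_image : p.1.edges = q.1.edges.image (Sym2.map (parent v v1 v2)) := by
  ext e
  induction e using Sym2.ind with
  | _ x y =>
    refine ⟨fun hxy => ?_, fun hxy => ?_⟩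
    · by_cases hxv : x = v
      · rw [Sym2.eq_swap] at hxy ⊢
        exact h.mem_image_of_mem hxy (hxv ▸ (ne_of_mem_of_not_isDiag p.1.edges_nd hxy))
      · exact h.mem_image_of_mem hxy hxv
    · obtain ⟨e, he, heq⟩ := mem_image.1 hxy
      induction e using Sym2.ind with
      | _ a b =>
        rw [← heq, Sym2.map_mk]
        by_cases ha : a = v1 ∨ a = v2
        · have hb : b ≠ v1 ∧ b ≠ v2 := by
            have hnd := ne_of_mem_of_not_isDiag q.1.edges_nd he
            have := h.new_not_adj
            rcases ha with rfl | rfl <;> constructor <;> rintro rfl <;> simp_all [Sym2.eq_swap]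
          rw [Sym2.eq_swap] at he ⊢
          exact h.map_parent_mem he hb.1 hb.2
        · push Not at ha
          exact h.map_parent_mem he ha.1 ha.2

end ExclStepAt

section Merge

variable {H : SG} {G : ICG} {g hub : ℕ → ℕ}

def IsCoherentFiber (H : SG) (g : ℕ → ℕ) (w : ℕ) : Prop :=
  ∀ a ∈ H.verts, ∀ b ∈ H.verts, g a = w → g b = w → Reach H a b

open Classical in
noncomputable def mergeFibers (H : SG) (g hub : ℕ → ℕ) (x : ℕ) : ℕ :=
  if IsCoherentFiber H g (g x) then hub (g x) else x

noncomputable def mergedEdges (H : SG) (g hub : ℕ → ℕ) : Finset (Sym2 ℕ) :=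
  H.edges.image (Sym2.map (mergeFibers H g hub))

variable (hhub : ∀ x ∈ H.verts, hub (g x) ∈ H.verts ∧ g (hub (g x)) = g x)
include hhub

lemma mergeFibers_mem {x : ℕ} (hx : x ∈ H.verts) :
    mergeFibers H g hub x ∈ H.verts ∧ g (mergeFibers H g hub x) = g x := by
  unfold mergeFibers
  split_ifs
  exacts [hhub x hx, ⟨hx, rfl⟩]

lemma reach_mergeFibers {x : ℕ} (hx : x ∈ H.verts) : Reach H (mergeFibers H g hub x) x := by
  unfold mergeFibers
  split_ifs with hc
  exacts [hc _ (hhub x hx).1 _ hx (hhub x hx).2 rfl, ReflTransGen.refl]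

lemma mem_verts_of_mem_mergeFibers_image :
    ∀ e ∈ mergedEdges H g hub, ∀ x ∈ e, x ∈ H.verts := by
  intro e' he' x hx
  obtain ⟨e, he, rfl⟩ := mem_image.1 he'
  obtain ⟨y, hy, rfl⟩ := Sym2.mem_map.1 hx
  exact (mergeFibers_mem hhub (H.edges_mem _ he y hy)).1

lemma image_map_mergeFibers_image :
    (mergedEdges H g hub).image (Sym2.map g) = H.edges.image (Sym2.map g) := by
  rw [mergedEdges, image_image]
  refine image_congr fun e he => ?_
  rw [Function.comp_apply, Sym2.map_map]
  exact Sym2.map_congr fun x hx => (mergeFibers_mem hhub (H.edges_mem _ he x hx)).2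

lemma reach_of_reflTransGen_mergeFibers {a b : ℕ}
    (h : ReflTransGen (Sym2.ToRel (mergedEdges H g hub)) a b) :
    Reach H a b := by
  refine reflTransGen_closed (fun c d hcd => ?_) a b h
  obtain ⟨e, he, heq⟩ := mem_image.1 hcd
  induction e using Sym2.ind with
  | _ x y =>
    have hx := H.edges_mem _ he x (Sym2.mem_mk_left x y)
    have hy := H.edges_mem _ he y (Sym2.mem_mk_right x y)
    have hxy : Reach H x y := ReflTransGen.single he
    rw [Sym2.map_mk] at heq
    rcases Sym2.eq_iff.1 heq with ⟨rfl, rfl⟩ | ⟨rfl, rfl⟩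
    · exact (reach_mergeFibers hhub hx).trans (hxy.trans (reach_mergeFibers hhub hy).symm)
    · exact (reach_mergeFibers hhub hy).trans
        (hxy.symm.trans (reach_mergeFibers hhub hx).symm)

lemma not_mem_mergeFibers_image {b : ℕ} (hb : b ∈ H.verts) (hc : IsCoherentFiber H g (g b))
    (hne : b ≠ hub (g b)) : ∀ e ∈ mergedEdges H g hub, b ∉ e := by
  intro e' he' hbe
  obtain ⟨e, he, rfl⟩ := mem_image.1 he'
  obtain ⟨x, hxe, rfl⟩ := Sym2.mem_map.1 hbe
  have hx := H.edges_mem _ he x hxe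
  have hgx := (mergeFibers_mem hhub hx).2
  unfold mergeFibers at hne hc hgx
  split_ifs at hne hc hgx with hcx
  · exact hne (by rw [hgx])
  · exact hcx hc

lemma exists_separated_lift_of_two_lifts {x y : ℕ} (hxy : x ≠ y)
    (hx : ∃ a ∈ H.verts, g a = x)
    (hy : ∃ b ∈ H.verts, ∃ b' ∈ H.verts, b ≠ b' ∧ g b = y ∧ g b' = y)
    (hall : ∀ a ∈ H.verts, ∀ b ∈ H.verts, g a = x → g b = y → Reach H a b) :
    ∃ a ∈ H.verts, ∃ b ∈ H.verts, g a = x ∧ g b = y ∧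
      ¬ ReflTransGen (Sym2.ToRel (mergedEdges H g hub)) a b := by
  obtain ⟨a, ha, rfl⟩ := hx
  obtain ⟨b, hb, b', hb', hbb', rfl, hgb'⟩ := hy
  have hcoh : IsCoherentFiber H g (g b) := fun c hc d hd hgc hgd =>
    (hall a ha c hc rfl hgc).symm.trans (hall a ha d hd rfl hgd)
  obtain ⟨c, hc, hgc, hne⟩ : ∃ c ∈ H.verts, g c = g b ∧ c ≠ hub (g b) := by
    by_cases hbh : b = hub (g b)
    · exact ⟨b', hb', hgb', fun h => hbb' (hbh.trans h.symm)⟩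
    · exact ⟨b, hb, rfl, hbh⟩
  refine ⟨a, ha, c, hc, rfl, hgc, fun h => hxy ?_⟩
  rw [eq_of_reflTransGen_of_not_mem (not_mem_mergeFibers_image hhub hc (hgc ▸ hcoh)
    (hgc ▸ hne)) h, hgc]

variable (hverts : H.verts.image g = G.verts)
  (hfix : ∀ x ∈ G.verts, x ∈ H.verts → g x = x)
  (hsplit : ∀ y ∈ G.verts, y ∉ H.verts →
    ∃ b ∈ H.verts, ∃ b' ∈ H.verts, b ≠ b' ∧ g b = y ∧ g b' = y)
  (hsep : ∀ e ∈ G.red, ∀ x y : ℕ, e = s(x,y) → x ∈ H.verts → y ∈ H.verts →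
    ¬ Reach H x y)
include hverts hfix hsplit hsep

lemma exists_separated_lift {e : Sym2 ℕ} (he : e ∈ G.red) :
    ∃ a ∈ H.verts, ∃ b ∈ H.verts, s(g a, g b) = e ∧
      ¬ ReflTransGen (Sym2.ToRel (mergedEdges H g hub)) a b := by
  induction e using Sym2.ind with
  | _ x y =>
    have hx0 := G.red_mem _ he x (Sym2.mem_mk_left x y)
    have hy0 := G.red_mem _ he y (Sym2.mem_mk_right x y)
    have hxy := ne_of_mem_of_not_isDiag G.red_nd he
    have hlift : ∀ z ∈ G.verts, ∃ a ∈ H.verts, g a = z := fun z hz =>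
      mem_image.1 (hverts ▸ hz)
    by_cases hS : ∃ a ∈ H.verts, ∃ b ∈ H.verts, g a = x ∧ g b = y ∧ ¬ Reach H a b
    · obtain ⟨a, ha, b, hb, rfl, rfl, hab⟩ := hS
      exact ⟨a, ha, b, hb, rfl, fun h => hab (reach_of_reflTransGen_mergeFibers hhub h)⟩
    push Not at hS
    by_cases hyV : y ∈ H.verts
    · by_cases hxV : x ∈ H.verts
      · exact absurd (hS x hxV y hyV (hfix x hx0 hxV) (hfix y hy0 hyV))
          (hsep _ he x y rfl hxV hyV)
      · obtain ⟨b, hb, a, ha, rfl, rfl, hn⟩ := exists_separated_lift_of_two_lifts hhub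
          hxy.symm (hlift y hy0) (hsplit x hx0 hxV)
          fun b hb a ha h1 h2 => (hS a ha b hb h2 h1).symm
        exact ⟨a, ha, b, hb, rfl, fun h => hn (Std.Symm.symm _ _ h)⟩
    · obtain ⟨a, ha, b, hb, rfl, rfl, hn⟩ := exists_separated_lift_of_two_lifts hhub hxy
        (hlift x hx0) (hsplit y hy0 hyV) hS
      exact ⟨a, ha, b, hb, rfl, hn⟩

end Merge

lemma exists_clustered_lift {H : SG} {G : ICG} {g : ℕ → ℕ}
    (hverts : H.verts.image g = G.verts) (hblue : H.edges.image (Sym2.map g) = G.blue)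
    (hfix : ∀ x ∈ G.verts, x ∈ H.verts → g x = x)
    (hsplit : ∀ y ∈ G.verts, y ∉ H.verts →
      ∃ b ∈ H.verts, ∃ b' ∈ H.verts, b ≠ b' ∧ g b = y ∧ g b' = y)
    (hsep : ∀ e ∈ G.red, ∀ x y : ℕ, e = s(x,y) → x ∈ H.verts → y ∈ H.verts →
      ¬ Reach H x y) :
    ∃ B R : Finset (Sym2 ℕ), (∀ e ∈ B, ∀ x ∈ e, x ∈ H.verts) ∧
      (∀ e ∈ R, ∀ x ∈ e, x ∈ H.verts) ∧ B.image (Sym2.map g) = G.blue ∧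
      R.image (Sym2.map g) = G.red ∧
      ∀ a b, s(a, b) ∈ R → ¬ ReflTransGen (Sym2.ToRel B) a b := by
  have hlift : ∀ w, ∃ c, w ∈ G.verts → c ∈ H.verts ∧ g c = w := fun w => by
    by_cases hw : w ∈ G.verts
    · obtain ⟨c, hc, rfl⟩ := mem_image.1 (hverts ▸ hw)
      exact ⟨c, fun _ => ⟨hc, rfl⟩⟩
    · exact ⟨0, fun h => absurd h hw⟩
  choose hub hhub using hlift
  have hhub' : ∀ x ∈ H.verts, hub (g x) ∈ H.verts ∧ g (hub (g x)) = g x := fun x hx =>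
    hhub _ (hverts ▸ mem_image_of_mem g hx)
  have hred : ∀ e, ∃ ab : ℕ × ℕ, e ∈ G.red → ab.1 ∈ H.verts ∧ ab.2 ∈ H.verts ∧
      s(g ab.1, g ab.2) = e ∧ ¬ ReflTransGen (Sym2.ToRel (mergedEdges H g hub)) ab.1 ab.2 := by
    intro e
    by_cases he : e ∈ G.red
    · obtain ⟨a, ha, b, hb, hab⟩ := exists_separated_lift hhub' hverts hfix hsplit hsep he
      exact ⟨(a, b), fun _ => ⟨ha, hb, hab⟩⟩
    · exact ⟨(0, 0), fun h => absurd h he⟩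
  choose ab hab using hred
  refine ⟨mergedEdges H g hub, G.red.image fun e => s((ab e).1, (ab e).2), ?_, ?_, ?_, ?_, ?_⟩
  · exact mem_verts_of_mem_mergeFibers_image hhub'
  · intro e' he' x hx
    obtain ⟨e, he, rfl⟩ := mem_image.1 he'
    rcases Sym2.mem_iff.1 hx with rfl | rfl
    exacts [(hab e he).1, (hab e he).2.1]
  · rw [image_map_mergeFibers_image hhub', hblue]
  · rw [image_image]
    conv_rhs => rw [← image_id (s := G.red)]
    exact image_congr fun e he => (hab e he).2.2.1
  · intro a b h
    obtain ⟨e, he, heq⟩ := mem_image.1 h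
    rcases Sym2.eq_iff.1 heq with ⟨rfl, rfl⟩ | ⟨rfl, rfl⟩
    · exact (hab e he).2.2.2
    · exact fun h' => (hab e he).2.2.2 (Std.Symm.symm _ _ h')

def ICG.lift (G : ICG) (V : Finset ℕ) (B R : Finset (Sym2 ℕ)) (g : ℕ → ℕ)
    (hB : ∀ e ∈ B, ∀ x ∈ e, x ∈ V) (hR : ∀ e ∈ R, ∀ x ∈ e, x ∈ V)
    (hBg : ∀ e ∈ B, e.map g ∈ G.blue) (hRg : ∀ e ∈ R, e.map g ∈ G.red) : ICG where
  verts := V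
  blue := B
  red := R
  blue_mem := hB
  red_mem := hR
  blue_nd e he hd := G.blue_nd _ (hBg e he) hd.map
  red_nd e he hd := G.red_nd _ (hRg e he) hd.map
  disj := disjoint_left.2 fun e hb hr => disjoint_left.1 G.disj (hBg e hb) (hRg e hr)

lemma map_mem_of_mem_image_compRange {f : ℕ → ℕ → ℕ} {n t : ℕ} {F K : Finset (Sym2 ℕ)}
    (hF : F.image (Sym2.map (compRange f 0 n)) = K) (ht : t ≤ n) :
    ∀ e ∈ F.image (Sym2.map (compRange f t (n - t))), e.map (compRange f 0 t) ∈ K := by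
  intro e' he'
  obtain ⟨e, he, rfl⟩ := mem_image.1 he'
  rw [Sym2.map_map, compRange_zero_comp_sub _ ht, ← hF]
  exact mem_image_of_mem _ he

section ExclSeq

variable {q : ℕ → SG × Finset ℕ} {v v1 v2 : ℕ → ℕ} {n : ℕ}
  (hq : ∀ t < n, ExclStepAt (q t) (q (t + 1)) (v t) (v1 t) (v2 t))
include hq

lemma verts_eq_image_compRange {t : ℕ} (ht : t ≤ n) :
    (q t).1.verts = (q n).1.verts.image (compRange (stepParent v v1 v2) t (n - t)) := by
  have := image_compRange (stepParent v v1 v2) (A := fun t => (q t).1.verts) (s := t) (m := n - t)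
    fun s _ hs => by
      have h := hq s (by omega)
      rw [h.verts_eq]
      exact (image_parent_split h.mem h.fresh1 h.fresh2).symm
  rwa [Nat.add_sub_cancel' ht] at this

lemma edges_eq_image_compRange :
    (q 0).1.edges = (q n).1.edges.image (Sym2.map (compRange (stepParent v v1 v2) 0 n)) := by
  rw [sym2Map_compRange]
  have := image_compRange (fun t => Sym2.map (stepParent v v1 v2 t))
    (A := fun t => (q t).1.edges) (s := 0) (m := n) fun s _ hs => (hq s (by omega)).edges_eq_image
  rwa [zero_add] at this

lemma used_mono {s t : ℕ} (hst : s ≤ t) (ht : t ≤ n) : (q s).2 ⊆ (q t).2 := by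
  induction t, hst using Nat.le_induction with
  | base => exact subset_rfl
  | succ t _ ih =>
    rw [(hq t (by omega)).used_eq]
    exact (ih (by omega)).trans ((subset_insert _ _).trans (subset_insert _ _))

lemma mem_verts_of_mem_image_ancestor {F : Finset (Sym2 ℕ)}
    (hF : ∀ e ∈ F, ∀ x ∈ e, x ∈ (q n).1.verts) {t : ℕ} (ht : t ≤ n) :
    ∀ e ∈ F.image (Sym2.map (compRange (stepParent v v1 v2) t (n - t))), ∀ x ∈ e,
      x ∈ (q t).1.verts := by
  intro e' he' x hx
  obtain ⟨e, he, rfl⟩ := mem_image.1 he'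
  obtain ⟨y, hy, rfl⟩ := Sym2.mem_map.1 hx
  exact verts_eq_image_compRange hq ht ▸ mem_image_of_mem _ (hF e he y hy)

lemma exists_splits_of_final {G : ICG} (hG : (q 0).1.verts = G.verts)
    {B R : Finset (Sym2 ℕ)} (hBV : ∀ e ∈ B, ∀ x ∈ e, x ∈ (q n).1.verts)
    (hRV : ∀ e ∈ R, ∀ x ∈ e, x ∈ (q n).1.verts)
    (hB : B.image (Sym2.map (compRange (stepParent v v1 v2) 0 n)) = G.blue)
    (hR : R.image (Sym2.map (compRange (stepParent v v1 v2) 0 n)) = G.red) :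
    ∃ G', Splits n G G' ∧ G'.blue = B ∧ G'.red = R := by
  set anc : ℕ → ℕ → ℕ := fun t => compRange (stepParent v v1 v2) t (n - t) with hanc
  let f : ℕ → ICG := fun t => if ht : t ≤ n then
    G.lift (q t).1.verts (B.image (Sym2.map (anc t))) (R.image (Sym2.map (anc t)))
      (compRange (stepParent v v1 v2) 0 t) (mem_verts_of_mem_image_ancestor hq hBV ht)
      (mem_verts_of_mem_image_ancestor hq hRV ht) (map_mem_of_mem_image_compRange hB ht)
      (map_mem_of_mem_image_compRange hR ht) else G
  have hf : ∀ t (ht : t ≤ n), (f t).verts = (q t).1.verts ∧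
      (f t).blue = B.image (Sym2.map (anc t)) ∧ (f t).red = R.image (Sym2.map (anc t)) :=
    fun t ht => by simp only [f, dif_pos ht]; exact ⟨rfl, rfl, rfl⟩
  have hn : anc n = id := by simp [hanc]
  refine ⟨f n, ⟨f, ?_, rfl, fun t ht => ?_⟩, by simp [(hf n le_rfl).2.1, hn],
    by simp [(hf n le_rfl).2.2, hn]⟩
  · obtain ⟨h1, h2, h3⟩ := hf 0 (Nat.zero_le n)
    exact ICG.ext (h1.trans hG) (h2.trans hB) (h3.trans hR)
  · obtain ⟨h1, h2, h3⟩ := hf t ht.le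
    obtain ⟨h1', h2', h3'⟩ := hf (t + 1) ht
    have h := hq t ht
    have hstep : ∀ F : Finset (Sym2 ℕ), F.image (Sym2.map (anc t)) =
        (F.image (Sym2.map (anc (t + 1)))).image (Sym2.map (parent (v t) (v1 t) (v2 t))) := by
      intro F
      rw [image_image, hanc]
      simp only [compRange_sub _ ht, Sym2.map_comp]
      rfl
    exact permSplit_of_image_parent (h1 ▸ h.mem) (h1 ▸ h.fresh1) (h1 ▸ h.fresh2) h.ne
      (h1' ▸ h1 ▸ h.verts_eq) (by rw [h2, h2', hstep]) (by rw [h3, h3', hstep])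

variable (h0 : (q 0).1.verts ⊆ (q 0).2)
include h0

lemma compRange_eq_self {x t : ℕ} (hx0 : x ∈ (q 0).1.verts) (ht : t ≤ n)
    (hxt : x ∈ (q t).1.verts) : compRange (stepParent v v1 v2) 0 t x = x := by
  induction t with
  | zero => rfl
  | succ t ih =>
    have h := hq t (by omega)
    have hx : x ∈ (q t).2 := used_mono hq (Nat.zero_le t) (by omega) (h0 hx0)
    have hx1 : x ≠ v1 t := fun h' => h.unused1 (h' ▸ hx)
    have hx2 : x ≠ v2 t := fun h' => h.unused2 (h' ▸ hx)
    rw [h.verts_eq] at hxt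
    simp only [mem_insert, hx1, hx2, mem_erase, false_or] at hxt
    rw [compRange_succ', Function.comp_apply, zero_add, stepParent, parent_of_ne hx1 hx2,
      ih (by omega) hxt.2]

lemma exists_two_lifts {y : ℕ} (hy0 : y ∈ (q 0).1.verts) (hyn : y ∉ (q n).1.verts) :
    ∃ b ∈ (q n).1.verts, ∃ b' ∈ (q n).1.verts, b ≠ b' ∧
      compRange (stepParent v v1 v2) 0 n b = y ∧ compRange (stepParent v v1 v2) 0 n b' = y := by
  obtain ⟨t, htn, hyt, hyt1⟩ :=
    Nat.exists_lt_and_not_succ (P := fun t => y ∈ (q t).1.verts) hy0 hyn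
  have h := hq t (by omega)
  have hyv : y = v t := by
    by_contra hne
    exact hyt1 (h.verts_eq ▸ mem_insert_of_mem (mem_insert_of_mem (mem_erase.2 ⟨hne, hyt⟩)))
  have hlift : ∀ i ∈ (q (t + 1)).1.verts, stepParent v v1 v2 t i = v t →
      ∃ b ∈ (q n).1.verts, compRange (stepParent v v1 v2) (t + 1) (n - (t + 1)) b = i ∧
        compRange (stepParent v v1 v2) 0 n b = y := by
    intro i hi hpi
    obtain ⟨b, hb, rfl⟩ :=
      mem_image.1 (verts_eq_image_compRange hq (t := t + 1) (by omega) ▸ hi)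
    refine ⟨b, hb, rfl, ?_⟩
    rw [← compRange_zero_comp_sub _ (show t + 1 ≤ n by omega), Function.comp_apply,
      compRange_succ', Function.comp_apply, zero_add, hpi, ← hyv,
      compRange_eq_self hq h0 hy0 (by omega) hyt]
  obtain ⟨b, hb, hb1, hgb⟩ := hlift (v1 t) (by rw [h.verts_eq]; simp) (by simp [stepParent])
  obtain ⟨b', hb', hb2, hgb'⟩ := hlift (v2 t) (by rw [h.verts_eq]; simp) (by simp [stepParent])
  exact ⟨b, hb, b', hb', fun hbb => h.ne (hb1.symm.trans (by rw [hbb, hb2])), hgb, hgb'⟩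

end ExclSeq

lemma clustered_of_mcSolution {G : ICG} {k : ℕ} {H : SG} (hv : H.verts = G.verts)
    (he : H.edges = G.blue) (h : MCSolution H G.red k) :
    ∃ n ≤ k, ∃ G', Splits n G G' ∧ ¬ HasErrCycle G' := by
  obtain ⟨n, q, hn, hq0, hsteps, hsep⟩ := h
  obtain ⟨v, v1, v2, hq⟩ := exists_seq_triple_of_forall_lt fun i hi => (hsteps i hi).exists_at
  have h0 : (q 0).1.verts ⊆ (q 0).2 := by rw [hq0]
  have hG : (q 0).1.verts = G.verts := by rw [hq0, hv]
  obtain ⟨B, R, hBV, hRV, hB, hR, hBR⟩ := exists_clustered_lift (H := (q n).1)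
    (hG ▸ (verts_eq_image_compRange hq (Nat.zero_le n)).symm)
    (by rw [← edges_eq_image_compRange hq, hq0, he])
    (fun x hx hxn => compRange_eq_self hq h0 (hG ▸ hx) le_rfl hxn)
    (fun y hy hyn => exists_two_lifts hq h0 (hG ▸ hy) hyn) hsep
  obtain ⟨G', hsplits, hblue, hred⟩ := exists_splits_of_final hq hG hBV hRV hB hR
  refine ⟨n, hn, G', hsplits, fun herr => ?_⟩
  obtain ⟨a, b, hab, hreach⟩ := hasErrCycle_iff.1 herr
  rw [hred] at hab
  rw [hblue] at hreach
  exact hBR a b hab hreach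

def ICG.blueImage (G : ICG) (F : Finset (Sym2 ℕ)) (hF : F ⊆ G.blue) (f : ℕ → ℕ)
    (hf : Set.InjOn f G.verts) : SG where
  verts := G.verts.image f
  edges := F.image (Sym2.map f)
  edges_mem e' he' x hx := by
    obtain ⟨e, he, rfl⟩ := mem_image.1 he'
    obtain ⟨y, hy, rfl⟩ := Sym2.mem_map.1 hx
    exact mem_image_of_mem f (G.blue_mem _ (hF he) y hy)
  edges_nd e' he' hd := by
    obtain ⟨e, he, rfl⟩ := mem_image.1 he'
    induction e using Sym2.ind with
    | _ x y =>
      rw [Sym2.map_mk, Sym2.mk_isDiag_iff] at hd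
      exact G.blue_nd _ (hF he) (Sym2.mk_isDiag_iff.2 (hf (G.blue_mem _ (hF he) x
        (Sym2.mem_mk_left x y)) (G.blue_mem _ (hF he) y (Sym2.mem_mk_right x y)) hd))

section Forward

variable (p : ℕ → ICG) (v v1 v2 : ℕ → ℕ) (N : ℕ)

def rename : ℕ → ℕ → ℕ
  | 0, x => x
  | t + 1, x => if x = v1 t then N + 2 * t else if x = v2 t then N + 2 * t + 1 else rename t x

/-- At the split of `v t`, a kept edge `x (v t)` is kept as `x (v1 t)` when that edge is blue,
and as `x (v2 t)` otherwise. -/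
def exclusiveBlue : ℕ → Finset (Sym2 ℕ)
  | 0 => (p 0).blue
  | t + 1 => (p (t + 1)).blue.filter fun e =>
      e.map (stepParent v v1 v2 t) ∈ exclusiveBlue t ∧
        ∀ x ∈ (p (t + 1)).verts, e = s(x, v2 t) → s(x, v1 t) ∉ (p (t + 1)).blue

def usedNames (V : Finset ℕ) (t : ℕ) : Finset ℕ := V ∪ (range (2 * t)).image (N + ·)

variable {p v v1 v2 N}

lemma exclusiveBlue_subset : ∀ t, exclusiveBlue p v v1 v2 t ⊆ (p t).blue
  | 0 => subset_rfl
  | _ + 1 => filter_subset _ _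

lemma exclusiveBlue_excl (t x : ℕ) : ¬ (s(x, v1 t) ∈ exclusiveBlue p v v1 v2 (t + 1) ∧
    s(x, v2 t) ∈ exclusiveBlue p v v1 v2 (t + 1)) :=
  fun ⟨h1, h2⟩ => (mem_filter.1 h2).2.2 x
    ((p (t + 1)).blue_mem _ (exclusiveBlue_subset _ h1) x (Sym2.mem_mk_left _ _)) rfl
    (exclusiveBlue_subset _ h1)

lemma mem_image_exclusiveBlue_succ {t : ℕ} {e d : Sym2 ℕ} (he : e ∈ (p (t + 1)).blue)
    (hd : d ∈ exclusiveBlue p v v1 v2 t) (hed : e.map (stepParent v v1 v2 t) = d)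
    (hv2 : ∀ z ∈ (p (t + 1)).verts, e = s(z, v2 t) → s(z, v1 t) ∉ (p (t + 1)).blue) :
    d ∈ (exclusiveBlue p v v1 v2 (t + 1)).image (Sym2.map (stepParent v v1 v2 t)) :=
  mem_image.2 ⟨e, mem_filter.2 ⟨he, hed ▸ hd, hv2⟩, hed⟩

lemma mem_image_exclusiveBlue_of_split {t x : ℕ}
    (h : PermSplitAt (p t) (p (t + 1)) (v t) (v1 t) (v2 t)) (hx : x ∈ (p t).verts)
    (hd : s(x, v t) ∈ exclusiveBlue p v v1 v2 t) :
    s(x, v t) ∈ (exclusiveBlue p v v1 v2 (t + 1)).image (Sym2.map (stepParent v v1 v2 t)) := by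
  have hx12 := h.ne_of_mem hx
  have hpx : stepParent v v1 v2 t x = x := parent_of_ne hx12.1 hx12.2
  by_cases h1 : s(x, v1 t) ∈ (p (t + 1)).blue
  · refine mem_image_exclusiveBlue_succ h1 hd
      (by rw [Sym2.map_mk, hpx, stepParent, parent_left]) fun z _ hz => ?_
    rcases Sym2.eq_iff.1 hz with ⟨-, h'⟩ | ⟨h', -⟩
    exacts [absurd h' h.ne, absurd h' hx12.2]
  · have h2 := (h.blue_cover x (exclusiveBlue_subset t hd)).resolve_left h1
    refine mem_image_exclusiveBlue_succ h2 hd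
      (by rw [Sym2.map_mk, hpx, stepParent, parent_right]) fun z _ hz => ?_
    rcases Sym2.eq_iff.1 hz with ⟨rfl, -⟩ | ⟨h', -⟩
    exacts [h1, absurd h' hx12.2]

lemma exclusiveBlue_eq_image {t : ℕ}
    (h : PermSplitAt (p t) (p (t + 1)) (v t) (v1 t) (v2 t)) :
    exclusiveBlue p v v1 v2 t =
      (exclusiveBlue p v v1 v2 (t + 1)).image (Sym2.map (stepParent v v1 v2 t)) := by
  ext d
  refine ⟨fun hd => ?_, fun hd => ?_⟩
  · induction d using Sym2.ind with
    | _ x y =>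
      have hb := exclusiveBlue_subset t hd
      have hx := h.ne_of_mem ((p t).blue_mem _ hb x (Sym2.mem_mk_left x y))
      have hy := h.ne_of_mem ((p t).blue_mem _ hb y (Sym2.mem_mk_right x y))
      by_cases hyv : y = v t
      · subst hyv
        exact mem_image_exclusiveBlue_of_split h ((p t).blue_mem _ hb x (Sym2.mem_mk_left _ _)) hd
      by_cases hxv : x = v t
      · subst hxv
        rw [Sym2.eq_swap] at hd ⊢
        exact mem_image_exclusiveBlue_of_split h ((p t).blue_mem _ hb y (Sym2.mem_mk_right _ _)) hd
      refine mem_image_exclusiveBlue_succ ((h.keep x y hxv hyv hx.1 hx.2 hy.1 hy.2).1.1 hb) hd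
        (by rw [Sym2.map_mk, stepParent, parent_of_ne hx.1 hx.2, parent_of_ne hy.1 hy.2])
        fun z _ hz => ?_
      rcases Sym2.eq_iff.1 hz with ⟨-, h'⟩ | ⟨h', -⟩
      exacts [absurd h' hy.2, absurd h' hx.2]
  · obtain ⟨e, he, rfl⟩ := mem_image.1 hd
    exact (mem_filter.1 he).2.1

lemma rename_eq_or_le (t x : ℕ) : rename v1 v2 N t x = x ∨ N ≤ rename v1 v2 N t x := by
  induction t with
  | zero => exact Or.inl rfl
  | succ t ih =>
    simp only [rename]
    split_ifs
    · exact Or.inr (by omega)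
    · exact Or.inr (by omega)
    · exact ih

lemma rename_succ_of_ne {t x : ℕ} (h1 : x ≠ v1 t) (h2 : x ≠ v2 t) :
    rename v1 v2 N (t + 1) x = rename v1 v2 N t x := by
  simp [rename, h1, h2]

@[simp] lemma rename_succ_left (t : ℕ) : rename v1 v2 N (t + 1) (v1 t) = N + 2 * t := by
  simp [rename]

lemma rename_succ_right {t : ℕ} (h : v1 t ≠ v2 t) :
    rename v1 v2 N (t + 1) (v2 t) = N + 2 * t + 1 := by
  simp [rename, Ne.symm h]

end Forward

lemma usedNames_succ (V : Finset ℕ) (N t : ℕ) :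
    usedNames N V (t + 1) = insert (N + 2 * t) (insert (N + 2 * t + 1) (usedNames N V t)) := by
  rw [usedNames, usedNames, show 2 * (t + 1) = 2 * t + 1 + 1 by ring, range_add_one,
    range_add_one, image_insert, image_insert, union_insert, union_insert, insert_comm]
  rfl

lemma not_mem_usedNames {V : Finset ℕ} {N t j : ℕ} (hV : ∀ x ∈ V, x < N)
    (hj : 2 * t ≤ j) :
    N + j ∉ usedNames N V t := by
  intro hmem
  rcases mem_union.1 hmem with h0 | hj'
  · have := hV _ h0
    omega
  · obtain ⟨i, hi, hij⟩ := mem_image.1 hj'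
    rw [mem_range] at hi
    omega

section ForwardSeq

variable {p : ℕ → ICG} {v v1 v2 : ℕ → ℕ} {n N : ℕ}
  (hp : ∀ t < n, PermSplitAt (p t) (p (t + 1)) (v t) (v1 t) (v2 t))
include hp

lemma rename_cases {t x : ℕ} (ht : t < n) (hx : x ∈ (p (t + 1)).verts) :
    (x = v1 t ∧ rename v1 v2 N (t + 1) x = N + 2 * t) ∨
    (x = v2 t ∧ rename v1 v2 N (t + 1) x = N + 2 * t + 1) ∨
    (x ∈ (p t).verts ∧ x ≠ v t ∧ rename v1 v2 N (t + 1) x = rename v1 v2 N t x) := by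
  have h := hp t ht
  rw [h.verts_eq] at hx
  simp only [mem_insert, mem_erase] at hx
  rcases hx with rfl | rfl | ⟨hxv, hx⟩
  · exact Or.inl ⟨rfl, rename_succ_left t⟩
  · exact Or.inr (Or.inl ⟨rfl, rename_succ_right h.ne⟩)
  · exact Or.inr (Or.inr ⟨hx, hxv, rename_succ_of_ne (fun h' => h.fresh1 (h' ▸ hx))
      (fun h' => h.fresh2 (h' ▸ hx))⟩)

lemma rename_eq_self_of_succ {t z : ℕ} (ht : t < n) (hz : z < N) (hzt : z ∈ (p (t + 1)).verts)
    (hφ : rename v1 v2 N (t + 1) z = z) :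
    z ∈ (p t).verts ∧ rename v1 v2 N t z = z ∧ z ≠ v t ∧ z ≠ v1 t ∧ z ≠ v2 t := by
  rcases rename_cases (N := N) hp ht hzt with ⟨-, h⟩ | ⟨-, h⟩ | ⟨hz', hzv, h⟩
  · omega
  · omega
  · exact ⟨hz', h ▸ hφ, hzv, (hp t ht).ne_of_mem hz'⟩

lemma rename_eq_self_of_le {z : ℕ} (hz : z < N) (hzn : z ∈ (p n).verts)
    (hφ : rename v1 v2 N n z = z) {t : ℕ} (ht : t ≤ n) :
    z ∈ (p t).verts ∧ rename v1 v2 N t z = z :=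
  Nat.decreasingInduction (motive := fun t _ => z ∈ (p t).verts ∧ rename v1 v2 N t z = z)
    (fun _ hk ih => (rename_eq_self_of_succ hp hk hz ih.1 ih.2).imp_right And.left)
    ⟨hzn, hφ⟩ ht

lemma red_mem_of_rename_eq_self {x y : ℕ} (hx : x < N) (hy : y < N) (hxn : x ∈ (p n).verts)
    (hyn : y ∈ (p n).verts) (hxφ : rename v1 v2 N n x = x) (hyφ : rename v1 v2 N n y = y)
    (h0 : s(x, y) ∈ (p 0).red) : ∀ t ≤ n, s(x, y) ∈ (p t).red := by
  intro t ht
  induction t with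
  | zero => exact h0
  | succ t ih =>
    have hx' := rename_eq_self_of_le hp hx hxn hxφ ht
    have hy' := rename_eq_self_of_le hp hy hyn hyφ ht
    obtain ⟨-, -, hxv, hx1, hx2⟩ := rename_eq_self_of_succ hp ht hx hx'.1 hx'.2
    obtain ⟨-, -, hyv, hy1, hy2⟩ := rename_eq_self_of_succ hp ht hy hy'.1 hy'.2
    exact ((hp t ht).keep x y hxv hyv hx1 hx2 hy1 hy2).2.1 (ih (by omega))

variable (hN : ∀ t ≤ n, ∀ x ∈ (p t).verts, x < N)
include hN

lemma rename_lt : ∀ {t : ℕ}, t ≤ n → ∀ x ∈ (p t).verts, rename v1 v2 N t x < N + 2 * t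
  | 0, _, x, hx => by simpa [rename] using hN 0 (Nat.zero_le n) x hx
  | t + 1, ht, x, hx => by
    rcases rename_cases (N := N) hp ht hx with ⟨-, h⟩ | ⟨-, h⟩ | ⟨hx, -, h⟩
    · omega
    · omega
    · have := rename_lt (t := t) (by omega) x hx
      omega

lemma rename_injOn : ∀ {t : ℕ}, t ≤ n → Set.InjOn (rename v1 v2 N t) (p t).verts
  | 0, _ => Set.injOn_id _
  | t + 1, ht => by
    intro x hx y hy hxy
    have hlt := rename_lt hp hN (t := t) (by omega)
    rcases rename_cases (N := N) hp ht hx with ⟨rfl, ex⟩ | ⟨rfl, ex⟩ | ⟨hx0, -, ex⟩ <;>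
    rcases rename_cases (N := N) hp ht hy with ⟨rfl, ey⟩ | ⟨rfl, ey⟩ | ⟨hy0, -, ey⟩ <;>
    first
      | rfl
      | (rw [ex, ey] at hxy
         first
           | exact rename_injOn (by omega) hx0 hy0 hxy
           | (have := hlt _ ‹_›; omega)
           | omega)

lemma rename_parent {t x : ℕ} (ht : t < n) (hx : x ∈ (p (t + 1)).verts) :
    rename v1 v2 N t (stepParent v v1 v2 t x) =
      parent (rename v1 v2 N t (v t)) (N + 2 * t) (N + 2 * t + 1) (rename v1 v2 N (t + 1) x) := by
  rcases rename_cases (N := N) hp ht hx with ⟨rfl, h⟩ | ⟨rfl, h⟩ | ⟨hx, hxv, h⟩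
  · simp [stepParent]
  · simp [h, stepParent]
  · have hlt := rename_lt hp hN ht.le x hx
    rw [h, stepParent, parent_of_ne ((hp t ht).ne_of_mem hx).1 ((hp t ht).ne_of_mem hx).2,
      parent_of_ne (by omega) (by omega)]

lemma image_rename_succ {t : ℕ} (ht : t < n) :
    (p (t + 1)).verts.image (rename v1 v2 N (t + 1)) = insert (N + 2 * t)
      (insert (N + 2 * t + 1) (((p t).verts.image (rename v1 v2 N t)).erase
        (rename v1 v2 N t (v t)))) := by
  have h := hp t ht
  have hinj := rename_injOn hp hN ht.le
  ext z
  simp only [mem_image, mem_insert, mem_erase]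
  constructor
  · rintro ⟨x, hx, rfl⟩
    rcases rename_cases (N := N) hp ht hx with ⟨-, h'⟩ | ⟨-, h'⟩ | ⟨hx, hxv, h'⟩
    · exact Or.inl h'
    · exact Or.inr (Or.inl h')
    · exact Or.inr (Or.inr ⟨h' ▸ fun h'' => hxv (hinj hx h.mem h''), x, hx, h'.symm⟩)
  · rintro (rfl | rfl | ⟨hzv, x, hx, rfl⟩)
    · exact ⟨v1 t, by rw [h.verts_eq]; simp, rename_succ_left t⟩
    · exact ⟨v2 t, by rw [h.verts_eq]; simp, rename_succ_right h.ne⟩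
    · have hxv : x ≠ v t := fun h' => hzv (h' ▸ rfl)
      exact ⟨x, by rw [h.verts_eq]; simp [hxv, hx],
        rename_succ_of_ne (h.ne_of_mem hx).1 (h.ne_of_mem hx).2⟩

lemma not_mem_image_rename {t j : ℕ} (ht : t ≤ n) (hj : 2 * t ≤ j) :
    N + j ∉ (p t).verts.image (rename v1 v2 N t) := by
  intro hmem
  obtain ⟨x, hx, hxj⟩ := mem_image.1 hmem
  have := rename_lt hp hN ht x hx
  omega

lemma image_exclusiveBlue_eq_image {t : ℕ} (ht : t < n) :
    (exclusiveBlue p v v1 v2 t).image (Sym2.map (rename v1 v2 N t)) =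
      ((exclusiveBlue p v v1 v2 (t + 1)).image (Sym2.map (rename v1 v2 N (t + 1)))).image
        (Sym2.map (parent (rename v1 v2 N t (v t)) (N + 2 * t) (N + 2 * t + 1))) := by
  rw [exclusiveBlue_eq_image (hp t ht), image_image, image_image]
  refine image_congr fun e he => ?_
  simp only [Function.comp_apply, Sym2.map_map]
  exact Sym2.map_congr fun x hx => rename_parent hp hN ht
    ((p (t + 1)).blue_mem _ (exclusiveBlue_subset _ he) x hx)

lemma image_exclusiveBlue_excl {t : ℕ} (ht : t < n) (u : ℕ) :
    ¬ (s(u, N + 2 * t) ∈ (exclusiveBlue p v v1 v2 (t + 1)).image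
        (Sym2.map (rename v1 v2 N (t + 1))) ∧
      s(u, N + 2 * t + 1) ∈ (exclusiveBlue p v v1 v2 (t + 1)).image
        (Sym2.map (rename v1 v2 N (t + 1)))) := by
  rintro ⟨h1, h2⟩
  have h := hp t ht
  have hinj := rename_injOn hp hN (t := t + 1) ht
  have hF : ∀ e ∈ exclusiveBlue p v v1 v2 (t + 1), ∀ x ∈ e, x ∈ (p (t + 1)).verts :=
    fun e he => (p (t + 1)).blue_mem _ (exclusiveBlue_subset _ he)
  obtain ⟨e, he, heq⟩ := mem_image.1 h1
  obtain ⟨a, ha, rfl⟩ : ∃ a ∈ (p (t + 1)).verts, rename v1 v2 N (t + 1) a = u := by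
    obtain ⟨a, ha, hau⟩ := Sym2.mem_map.1 (heq ▸ Sym2.mem_mk_left u _ : u ∈ e.map _)
    exact ⟨a, hF e he a ha, hau⟩
  rw [← rename_succ_left (v1 := v1) (v2 := v2) (N := N) t] at h1
  rw [← rename_succ_right (N := N) h.ne] at h2
  have hv1 : v1 t ∈ (p (t + 1)).verts := by rw [h.verts_eq]; simp
  have hv2 : v2 t ∈ (p (t + 1)).verts := by rw [h.verts_eq]; simp
  exact exclusiveBlue_excl t a ⟨(mem_image_sym2Map_iff hinj hF ha hv1).1 h1,
    (mem_image_sym2Map_iff hinj hF ha hv2).1 h2⟩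

lemma exclStep_of_rename {t : ℕ} (ht : t < n) {A B : SG}
    (hAv : A.verts = (p t).verts.image (rename v1 v2 N t))
    (hAe : A.edges = (exclusiveBlue p v v1 v2 t).image (Sym2.map (rename v1 v2 N t)))
    (hBv : B.verts = (p (t + 1)).verts.image (rename v1 v2 N (t + 1)))
    (hBe : B.edges =
      (exclusiveBlue p v v1 v2 (t + 1)).image (Sym2.map (rename v1 v2 N (t + 1)))) :
    ExclStep (A, usedNames N (p 0).verts t) (B, usedNames N (p 0).verts (t + 1)) := by
  refine exclStep_of_image_parent (v1 := N + 2 * t) (v2 := N + 2 * t + 1)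
    (hAv ▸ mem_image_of_mem _ (hp t ht).mem) (not_mem_usedNames (hN 0 (Nat.zero_le n)) le_rfl)
    (not_mem_usedNames (hN 0 (Nat.zero_le n)) (j := 2 * t + 1) (by omega))
    (hAv ▸ not_mem_image_rename hp hN ht.le le_rfl)
    (hAv ▸ not_mem_image_rename hp hN (j := 2 * t + 1) ht.le (by omega)) (by omega)
    (usedNames_succ _ _ _) (by rw [hBv, hAv]; exact image_rename_succ hp hN ht)
    (by rw [hAe, hBe]; exact image_exclusiveBlue_eq_image hp hN ht) fun u => ?_
  rw [hBe]
  exact image_exclusiveBlue_excl hp hN ht u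

lemma not_reach_of_rename {A : SG} (hAv : A.verts = (p n).verts.image (rename v1 v2 N n))
    (hAe : A.edges = (exclusiveBlue p v v1 v2 n).image (Sym2.map (rename v1 v2 N n)))
    (hclust : ¬ HasErrCycle (p n)) :
    ∀ e ∈ (p 0).red, ∀ x y : ℕ, e = s(x, y) → x ∈ A.verts → y ∈ A.verts →
      ¬ Reach A x y := by
  rintro e he x y rfl hx hy hreach
  have hinj := rename_injOn hp hN (le_refl n)
  have hfixed : ∀ z ∈ (p 0).verts, z ∈ A.verts →
      z ∈ (p n).verts ∧ rename v1 v2 N n z = z := by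
    intro z hz0 hz
    rw [hAv] at hz
    obtain ⟨w, hw, hwz⟩ := mem_image.1 hz
    rcases rename_eq_or_le (v1 := v1) (v2 := v2) (N := N) n w with h | h
    · rw [h] at hwz
      exact hwz ▸ ⟨hw, h⟩
    · have := hN 0 (Nat.zero_le n) z hz0
      omega
  have hx0 := (p 0).red_mem _ he x (Sym2.mem_mk_left x y)
  have hy0 := (p 0).red_mem _ he y (Sym2.mem_mk_right x y)
  obtain ⟨hxn, hxφ⟩ := hfixed x hx0 hx
  obtain ⟨hyn, hyφ⟩ := hfixed y hy0 hy
  change ReflTransGen (fun a b => s(a, b) ∈ A.edges) x y at hreach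
  rw [hAe, ← hxφ] at hreach
  obtain ⟨b, hb, hby, hxb⟩ := exists_reflTransGen_of_reflTransGen_image hinj
    (fun e he => (p n).blue_mem _ (exclusiveBlue_subset _ he)) hxn hreach
  rw [hinj hb hyn (hby.trans hyφ.symm)] at hxb
  exact hclust (hasErrCycle_iff.2 ⟨x, y, red_mem_of_rename_eq_self hp (hN 0 (Nat.zero_le n) x hx0)
    (hN 0 (Nat.zero_le n) y hy0) hxn hyn hxφ hyφ he n le_rfl,
    ReflTransGen.mono (fun _ _ h => exclusiveBlue_subset n h) x y hxb⟩)

end ForwardSeq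

lemma mcSolution_of_clustered {G : ICG} {k : ℕ} {H : SG} (hv : H.verts = G.verts)
    (he : H.edges = G.blue) (h : ∃ n ≤ k, ∃ G', Splits n G G' ∧ ¬ HasErrCycle G') :
    MCSolution H G.red k := by
  obtain ⟨n, hn, G', ⟨p, rfl, rfl, hsteps⟩, hclust⟩ := h
  obtain ⟨v, v1, v2, hp⟩ := exists_seq_triple_of_forall_lt fun i hi => (hsteps i hi).exists_at
  obtain ⟨N, hN⟩ : ∃ N, ∀ t ≤ n, ∀ x ∈ (p t).verts, x < N :=
    ⟨((range (n + 1)).biUnion fun t => (p t).verts).sup id + 1, fun t ht x hx =>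
      Nat.lt_succ_of_le (le_sup (f := id) (mem_biUnion.2 ⟨t, mem_range.2 (by omega), hx⟩))⟩
  refine ⟨n, fun t => if ht : t ≤ n then ((p t).blueImage (exclusiveBlue p v v1 v2 t)
    (exclusiveBlue_subset t) (rename v1 v2 N t) (rename_injOn hp hN ht), usedNames N (p 0).verts t)
    else (H, H.verts), hn, ?_, fun t ht => ?_, ?_⟩
  · simp only [dif_pos (Nat.zero_le n)]
    refine Prod.ext (SG.ext ?_ ?_) ?_
    · exact image_id'.trans hv.symm
    · show (p 0).blue.image (Sym2.map fun x => x) = H.edges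
      rw [Sym2.map_id', image_id, he]
    · simp [usedNames, hv]
  · simp only [dif_pos ht.le, dif_pos (show t + 1 ≤ n from ht)]
    exact exclStep_of_rename hp hN ht rfl rfl rfl rfl
  · simp only [dif_pos le_rfl]
    exact not_reach_of_rename hp hN rfl rfl hclust

theorem stmt2 (G : ICG) (k : ℕ) (H : SG)
    (hv : H.verts = G.verts) (he : H.edges = G.blue) :
    (∃ n ≤ k, ∃ G', Splits n G G' ∧ ¬ HasErrCycle G') ↔ MCSolution H G.red k :=
  ⟨mcSolution_of_clustered hv he, clustered_of_mcSolution hv he⟩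
end
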